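/- arXiv:2011.14191 — 12 statements merged into one kernel-verified Lean document; each statement's English description precedes it below -/
import Mathlib

section
/- Let G be a finitely generated group, K a field, and A a K-vector space. Then every finite-dimensional linear subshift Σ ⊆ A^G is a subshift of finite type, i.e., there exist a finite subset D ⊆ G and a subset W ⊆ A^D such that Σ = Σ(D, W). -/
def shiftSigma (G : Type*) [Group G] {A : Type*} (D : Set G) (P : Set (D → A)) :
    Set (G → A) :=
  {x | ∀ g : G, (fun d : D => x (g * (d : G))) ∈ P}

def prodiscreteTop (G A : Type*) : TopologicalSpace (G → A) :=
  @Pi.topologicalSpace G (fun _ => A) (fun _ => ⊥)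

def IsLinearSubshift (K : Type*) {G A : Type*} [Field K] [Group G] [AddCommGroup A]
    [Module K A] (S : Set (G → A)) : Prop :=
  (∃ M : Submodule K (G → A), (M : Set (G → A)) = S) ∧
    (∀ g : G, ∀ x ∈ S, (fun h => x (g⁻¹ * h)) ∈ S) ∧
    @IsClosed _ (prodiscreteTop G A) S

def IsSFT {G A : Type*} [Group G] (S : Set (G → A)) : Prop :=
  ∃ (D : Finset G) (P : Set (↥(D : Set G) → A)), S = shiftSigma G (D : Set G) P

def IsLCA (K : Type*) {G A : Type*} [Field K] [Group G] [AddCommGroup A] [Module K A]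
    (τ : (G → A) → (G → A)) : Prop :=
  IsLinearMap K τ ∧ ∃ (M : Finset G) (μ : (↥(M : Set G) → A) → A), IsLinearMap K μ ∧
    ∀ (x : G → A) (g : G), τ x g = μ (fun m : (M : Set G) => x (g * (m : G)))

theorem stmt2 {G K A : Type*} [Group G] [Field K] [AddCommGroup A] [Module K A]
    (hfg : Group.FG G) (S : Set (G → A)) (hlin : IsLinearSubshift K S)
    (hfd : FiniteDimensional K ↥(Submodule.span K S)) :
    IsSFT S := by
  classical
  obtain ⟨⟨M, hM⟩, hshift, _⟩ := hlin
  -- `M` is finite dimensional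
  have hspan : Submodule.span K S = M := by rw [← hM, Submodule.span_eq]
  rw [hspan] at hfd
  -- shift invariance in the convenient form
  have hshift' : ∀ g : G, ∀ x ∈ S, (fun h => x (g * h)) ∈ S := by
    intro g x hx
    have := hshift g⁻¹ x hx
    simpa using this
  -- Step 1 : a finite window on which evaluation is injective on S
  set N : Finset G → Submodule K ↥M :=
    fun F => ⨅ d ∈ F, LinearMap.ker ((LinearMap.proj d).comp M.subtype) with hN
  have hNmem : ∀ (F : Finset G) (m : ↥M), m ∈ N F ↔ ∀ d ∈ F, (m : G → A) d = 0 := by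
    intro F m
    simp [hN, Submodule.mem_iInf, LinearMap.mem_ker]
  haveI : IsArtinian K ↥M := inferInstance
  obtain ⟨N₀, ⟨F₀, rfl⟩, hmin⟩ :=
    IsArtinian.set_has_minimal (Set.range N) ⟨N ∅, ⟨∅, rfl⟩⟩
  have hinj : ∀ x ∈ S, (∀ d ∈ F₀, x d = 0) → x = 0 := by
    intro x hxS hx0
    have hxM : x ∈ M := by rw [show S = ↑M from hM.symm] at hxS; exact hxS
    have hm : (⟨x, hxM⟩ : ↥M) ∈ N F₀ := (hNmem F₀ _).2 hx0
    have hall : ∀ d : G, x d = 0 := by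
      intro d
      have hle : N (insert d F₀) ≤ N F₀ := by
        intro z hz
        rw [hNmem] at hz ⊢
        exact fun e he => hz e (Finset.mem_insert_of_mem he)
      have heq : N (insert d F₀) = N F₀ := by
        by_contra hne
        exact hmin _ ⟨_, rfl⟩ (lt_of_le_of_ne hle hne)
      have : (⟨x, hxM⟩ : ↥M) ∈ N (insert d F₀) := heq ▸ hm
      exact (hNmem _ _).1 this d (Finset.mem_insert_self d F₀)
    funext d; exact hall d
  -- Step 2 : generators
  obtain ⟨Sgen, hcl, hfin⟩ := Group.fg_iff.1 hfg
  set T : Finset G := insert 1 hfin.toFinset with hT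
  have h1T : (1 : G) ∈ T := Finset.mem_insert_self _ _
  set D₀ : Finset G := insert 1 F₀ with hD₀
  have h1D₀ : (1 : G) ∈ D₀ := Finset.mem_insert_self _ _
  set D : Finset G := Finset.image (fun p : G × G => p.1 * p.2) (T ×ˢ D₀) with hD
  have hmemD : ∀ t ∈ T, ∀ e ∈ D₀, t * e ∈ D := by
    intro t ht e he
    exact Finset.mem_image.2 ⟨(t, e), Finset.mem_product.2 ⟨ht, he⟩, rfl⟩
  have h1D : (1 : G) ∈ D := by
    have := hmemD 1 h1T 1 h1D₀
    simpa using this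
  -- vanishing lemma
  have hvan : ∀ z ∈ S, ∀ g : G, (∀ d ∈ D₀, z (g * d) = 0) → z = 0 := by
    intro z hzS g hz0
    have hz'S : (fun h => z (g * h)) ∈ S := hshift' g z hzS
    have hz' : (fun h => z (g * h)) = 0 := by
      refine hinj _ hz'S ?_
      intro d hd
      exact hz0 d (Finset.mem_insert_of_mem hd)
    funext h
    have := congrFun hz' (g⁻¹ * h)
    simpa using this
  refine ⟨D, (fun y => fun d : (↑D : Set G) => y (d : G)) '' S, ?_⟩
  ext x
  constructor
  · -- S ⊆ Σ(D, P)
    intro hx g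
    exact ⟨fun h => x (g * h), hshift' g x hx, rfl⟩
  · -- Σ(D, P) ⊆ S
    intro hx
    have hx' : ∀ g : G, ∃ y ∈ S, ∀ d ∈ D, y d = x (g * d) := by
      intro g
      obtain ⟨y, hyS, hy⟩ := hx g
      exact ⟨y, hyS, fun d hd => congrFun hy ⟨d, hd⟩⟩
    choose y hyS hyx using hx'
    set w : G → (G → A) := fun g => fun h => y g (g⁻¹ * h) with hw
    have hwS : ∀ g, w g ∈ S := fun g => hshift g (y g) (hyS g)
    have hwx : ∀ g : G, ∀ d ∈ D, w g (g * d) = x (g * d) := by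
      intro g d hd
      have : w g (g * d) = y g d := by simp [hw]
      rw [this]
      exact hyx g d hd
    -- step lemma
    have hstep : ∀ g : G, ∀ t ∈ T, w g = w (g * t) := by
      intro g t ht
      have hsub : (fun h => w g h - w (g * t) h) ∈ S := by
        rw [← hM] at hwS ⊢
        exact M.sub_mem (hwS g) (hwS (g * t))
      have hzero : (fun h => w g h - w (g * t) h) = 0 := by
        refine hvan _ hsub (g * t) ?_
        intro d hd
        have h1 : w g ((g * t) * d) = x ((g * t) * d) := by
          have := hwx g (t * d) (hmemD t ht d hd)
          rw [← mul_assoc] at this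
          exact this
        have h2 : w (g * t) ((g * t) * d) = x ((g * t) * d) := by
          have hdD : d ∈ D := by
            have := hmemD 1 h1T d hd
            simpa using this
          exact hwx (g * t) d hdD
        simp [h1, h2]
      funext h
      have := congrFun hzero h
      simpa [sub_eq_zero] using this
    -- all the `w g` are equal
    have hall : ∀ g k : G, w k = w (k * g) := by
      intro g
      have hg : g ∈ Subgroup.closure Sgen := by rw [hcl]; trivial
      induction hg using Subgroup.closure_induction with
      | mem s hs =>
          intro k
          exact hstep k s (Finset.mem_insert_of_mem (hfin.mem_toFinset.2 hs))
      | one => intro k; rw [mul_one]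
      | mul a b _ _ ha hb =>
          intro k
          rw [(ha k), ← mul_assoc]
          exact hb (k * a)
      | inv a _ ha =>
          intro k
          have := ha (k * a⁻¹)
          rw [inv_mul_cancel_right] at this
          exact this.symm
    have hx1 : x = w 1 := by
      funext g
      have h1 : x (g * 1) = w g (g * 1) := (hwx g 1 h1D).symm
      rw [mul_one] at h1
      have h2 : w 1 = w g := by
        have := hall g 1
        rwa [one_mul] at this
      rw [h1, ← h2]
    rw [hx1]
    exact hwS 1
end

section
/- Let G be a group, K a field, and A a nontrivial finite-dimensional K-vector space. Let Σ ⊆ A^G be the linear subshift of all constant configurations. Then Σ is a subshift of finite type if and only if G is finitely generated. -/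
theorem stmt3 {G K A : Type*} [Group G] [Field K] [AddCommGroup A] [Module K A]
    [Nontrivial A] [FiniteDimensional K A] :
    IsSFT {x : G → A | ∀ g h : G, x g = x h} ↔ Group.FG G := by
  constructor
  · rintro ⟨D, P, hS⟩
    rw [Group.fg_iff]
    refine ⟨(D : Set G), ?_, D.finite_toSet⟩
    set H := Subgroup.closure (D : Set G) with hH
    rw [Subgroup.eq_top_iff']
    intro g
    obtain ⟨a, ha⟩ := exists_ne (0 : A)
    classical
    set x : G → A := fun g => if g ∈ H then a else 0 with hx
    have hconst : ∀ b : A, (fun _ : G => b) ∈ {x : G → A | ∀ g h : G, x g = x h} := by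
      intro b g h; rfl
    have hxmem : x ∈ shiftSigma G (D : Set G) P := by
      intro k
      by_cases hk : k ∈ H
      · have : (fun d : (D : Set G) => x (k * (d : G))) =
            (fun d : (D : Set G) => (fun _ : G => a) (k * (d : G))) := by
          funext d
          have : k * (d : G) ∈ H := H.mul_mem hk (Subgroup.subset_closure d.2)
          simp [hx, this]
        rw [this]
        have := hconst a
        rw [hS] at this
        exact this k
      · have : (fun d : (D : Set G) => x (k * (d : G))) =
            (fun d : (D : Set G) => (fun _ : G => (0 : A)) (k * (d : G))) := by
          funext d
          have hd : (d : G) ∈ H := Subgroup.subset_closure d.2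
          have : k * (d : G) ∉ H := by
            intro hm
            exact hk (by simpa using H.mul_mem hm (H.inv_mem hd))
          simp [hx, this]
        rw [this]
        have := hconst (0 : A)
        rw [hS] at this
        exact this k
    rw [← hS] at hxmem
    have h1 : x 1 = a := by simp [hx, H.one_mem]
    have hg := hxmem g 1
    rw [h1] at hg
    by_contra hgH
    simp [hx, hgH] at hg
    exact ha hg.symm
  · intro hFG
    obtain ⟨S, hSgen, hSfin⟩ := Group.fg_iff.mp hFG
    classical
    lift S to Finset G using hSfin
    refine ⟨insert 1 S, {p | ∀ d, p d = p ⟨1, by simp⟩}, ?_⟩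
    ext x
    constructor
    · intro hx g d
      exact hx _ _
    · intro hx
      have key : ∀ g : G, ∀ h : G, x (h * g) = x h := by
        intro g
        have hg : g ∈ Subgroup.closure (S : Set G) := by rw [hSgen]; trivial
        induction hg using Subgroup.closure_induction with
        | mem s hs =>
          intro h
          have := hx h ⟨s, by simp [hs]⟩
          simpa using this
        | one => intro h; simp
        | mul a b _ _ ha hb =>
          intro h
          rw [← mul_assoc, hb, ha]
        | inv a _ ha =>
          intro h
          have := ha (h * a⁻¹)
          simpa using this.symm
      intro g h
      have hg := key g 1
      have hh := key h 1
      simp only [one_mul] at hg hh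
      rw [hg, hh]
end

section
/- Let G be a countable group, K a field, A a finite-dimensional K-vector space, and Σ ⊆ A^G a linear subshift. If Σ is of finite type, then every decreasing sequence Σ_0 ⊇ Σ_1 ⊇ Σ_2 ⊇ ... of linear subshifts of A^G with ⋂_{n∈ℕ} Σ_n = Σ eventually stabilizes: there exists n_0 such that Σ_n = Σ_{n_0} for all n ≥ n_0. -/
lemma key_lemma {G K A : Type*} [Group G] [Countable G] [Field K] [AddCommGroup A]
    [Module K A] [FiniteDimensional K A]
    (Ss : ℕ → Set (G → A)) (M : ℕ → Submodule K (G → A))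
    (hM : ∀ n, (M n : Set (G → A)) = Ss n)
    (hanti : Antitone Ss)
    (hclosed : ∀ n, @IsClosed _ (prodiscreteTop G A) (Ss n))
    (D : Finset G) (p : G → A)
    (hp : ∀ n, ∃ x ∈ Ss n, ∀ g ∈ D, x g = p g) :
    ∃ x, (∀ n, x ∈ Ss n) ∧ ∀ g ∈ D, x g = p g := by
  classical
  obtain ⟨e, hsurj⟩ := exists_surjective_nat G
  set Ω : ℕ → Finset G := fun k => D ∪ (Finset.range k).image e with hΩ
  have hΩmono : Monotone Ω := by
    intro a b hab
    refine Finset.union_subset_union_right (Finset.image_subset_image ?_)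
    intro i hi
    rw [Finset.mem_range] at hi ⊢
    omega
  have hMantimod : ∀ {a b : ℕ}, a ≤ b → M b ≤ M a := by
    intro a b hab
    intro z hz
    have : z ∈ Ss b := by rw [← hM b]; exact hz
    have : z ∈ Ss a := hanti hab this
    rw [← hM a] at this; exact this
  -- restriction maps and image chains
  set π : ∀ k : ℕ, (G → A) →ₗ[K] (↥(Ω k : Set G) → A) :=
    fun k => LinearMap.funLeft K A (fun d : ↥(Ω k : Set G) => (d : G)) with hπ
  set C : ∀ _ : ℕ, ℕ → Submodule K _ := fun k n => (M n).map (π k) with hC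
  have hstab : ∀ k, ∃ N, ∀ n, N ≤ n → C k n = C k N := by
    intro k
    have : ∀ {a b : ℕ}, a ≤ b → C k b ≤ C k a :=
      fun hab => Submodule.map_mono (hMantimod hab)
    obtain ⟨N, hN⟩ := IsArtinian.monotone_stabilizes
      (⟨fun n => OrderDual.toDual (C k n), fun a b hab => this hab⟩ :
        ℕ →o (Submodule K (↥(Ω k : Set G) → A))ᵒᵈ)
    exact ⟨N, fun n hn => (hN n hn).symm⟩
  choose N hN using hstab
  -- the sets of patterns realizable in every Ss n
  set E : ℕ → Set (G → A) :=
    fun k => {q | ∀ n, ∃ x ∈ Ss n, ∀ g ∈ Ω k, x g = q g} with hE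
  have hp0 : p ∈ E 0 := by
    intro n
    obtain ⟨x, hx, hxp⟩ := hp n
    exact ⟨x, hx, fun g hg => hxp g (by simpa [hΩ] using hg)⟩
  have step : ∀ k, ∀ q ∈ E k, ∃ q', q' ∈ E (k + 1) ∧ ∀ g ∈ Ω k, q' g = q g := by
    intro k q hq
    set N' := max (N k) (N (k + 1)) with hN'
    obtain ⟨x, hx, hxq⟩ := hq N'
    refine ⟨x, ?_, fun g hg => hxq g hg⟩
    intro n
    rcases le_total n N' with h | h
    · exact ⟨x, hanti h hx, fun _ _ => rfl⟩
    · have hxM : x ∈ M N' := by rw [← hM N'] at hx; exact hx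
      have h1 : π (k + 1) x ∈ C (k + 1) N' := Submodule.mem_map_of_mem hxM
      have h2 : C (k + 1) N' = C (k + 1) n := by
        rw [hN (k + 1) N' (le_max_right _ _), hN (k + 1) n (le_trans (le_max_right _ _) h)]
      rw [h2] at h1
      obtain ⟨y, hy, hyx⟩ := h1
      refine ⟨y, by rw [← hM n]; exact hy, fun g hg => ?_⟩
      have := congrFun hyx ⟨g, hg⟩
      simpa [hπ, LinearMap.funLeft_apply] using this
  choose f hf1 hf2 using step
  set seq : ∀ k : ℕ, {q : G → A // q ∈ E k} :=
    fun k => Nat.rec ⟨p, hp0⟩ (fun k ih => ⟨f k ih.1 ih.2, hf1 k ih.1 ih.2⟩) k with hseq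
  have hstep : ∀ k, ∀ g ∈ Ω k, (seq (k + 1)).1 g = (seq k).1 g := by
    intro k g hg
    exact hf2 k (seq k).1 (seq k).2 g hg
  have hconsist : ∀ k j, k ≤ j → ∀ g ∈ Ω k, (seq j).1 g = (seq k).1 g := by
    intro k j hkj
    induction j, hkj using Nat.le_induction with
    | base => intro g _; rfl
    | succ j hkj ih =>
      intro g hg
      rw [hstep j g (hΩmono hkj hg)]
      exact ih g hg
  choose idx hidx using hsurj
  have hmemΩ : ∀ g : G, g ∈ Ω (idx g + 1) := by
    intro g
    refine Finset.mem_union_right _ ?_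
    exact Finset.mem_image.2 ⟨idx g, Finset.mem_range.2 (Nat.lt_succ_self _), hidx g⟩
  set x : G → A := fun g => (seq (idx g + 1)).1 g with hxdef
  have hxΩ : ∀ k, ∀ g ∈ Ω k, x g = (seq k).1 g := by
    intro k g hg
    rcases le_total k (idx g + 1) with h | h
    · exact hconsist k (idx g + 1) h g hg
    · exact (hconsist (idx g + 1) k h g (hmemΩ g)).symm
  refine ⟨x, ?_, ?_⟩
  · intro n
    by_contra hxn
    have hop : @IsOpen _ (prodiscreteTop G A) (Ss n)ᶜ :=
      (@isOpen_compl_iff _ _ (prodiscreteTop G A)).2 (hclosed n)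
    have hop' : @IsOpen _ (@Pi.topologicalSpace G (fun _ => A) (fun _ => ⊥)) (Ss n)ᶜ := hop
    obtain ⟨I, u, hu, hsub⟩ := ((@isOpen_pi_iff G (fun _ => A) (fun _ => ⊥) _).1 hop') x hxn
    set k := I.sup idx + 1 with hk
    have hIk : ∀ g ∈ I, g ∈ Ω k := by
      intro g hg
      refine Finset.mem_union_right _ ?_
      exact Finset.mem_image.2 ⟨idx g, Finset.mem_range.2
        (Nat.lt_succ_of_le (Finset.le_sup hg)), hidx g⟩
    obtain ⟨y, hy, hyagree⟩ := (seq k).2 n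
    have : y ∈ (I : Set G).pi u := by
      intro g hg
      have hg' : g ∈ I := hg
      have : y g = x g := by rw [hyagree g (hIk g hg'), hxΩ k g (hIk g hg')]
      rw [this]
      exact (hu g hg').2
    exact (hsub this) hy
  · intro g hg
    have hg0 : g ∈ Ω 0 := Finset.mem_union_left _ hg
    have : x g = (seq 0).1 g := hxΩ 0 g hg0
    rw [this]
    rfl

theorem stmt4 {G K A : Type*} [Group G] [Countable G] [Field K] [AddCommGroup A]
    [Module K A] [FiniteDimensional K A]
    (S : Set (G → A)) (hlin : IsLinearSubshift K S) (hSFT : IsSFT S)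
    (Ss : ℕ → Set (G → A)) (hlins : ∀ n, IsLinearSubshift K (Ss n))
    (hdec : ∀ n, Ss (n + 1) ⊆ Ss n) (hint : ⋂ n, Ss n = S) :
    ∃ n₀ : ℕ, ∀ n ≥ n₀, Ss n = Ss n₀ := by
  obtain ⟨D, P, hS⟩ := hSFT
  choose M hMcar using fun n => (hlins n).1
  have hanti : Antitone Ss := antitone_nat_of_succ_le hdec
  have hMantimod : ∀ {a b : ℕ}, a ≤ b → M b ≤ M a := by
    intro a b hab z hz
    have : z ∈ Ss b := by rw [← hMcar b]; exact hz
    have : z ∈ Ss a := hanti hab this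
    rw [← hMcar a] at this; exact this
  set πD : (G → A) →ₗ[K] (↥(D : Set G) → A) :=
    LinearMap.funLeft K A (fun d : ↥(D : Set G) => (d : G)) with hπD
  set CD : ℕ → Submodule K (↥(D : Set G) → A) := fun n => (M n).map πD with hCD
  obtain ⟨n₀, hstab⟩ := IsArtinian.monotone_stabilizes
    (⟨fun n => OrderDual.toDual (CD n),
      fun a b hab => Submodule.map_mono (hMantimod hab)⟩ :
      ℕ →o (Submodule K (↥(D : Set G) → A))ᵒᵈ)
  refine ⟨n₀, fun n hn => ?_⟩
  refine Set.Subset.antisymm (hanti hn) ?_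
  have hsubS : Ss n₀ ⊆ S := by
    intro x hx
    rw [hS]
    intro g
    have hy : (fun h => x (g * h)) ∈ Ss n₀ := by
      have := (hlins n₀).2.1 g⁻¹ x hx
      simpa using this
    set y : G → A := fun h => x (g * h) with hydef
    have hyD : ∀ m, ∃ z ∈ Ss m, ∀ d ∈ D, z d = y d := by
      intro m
      have h1 : πD y ∈ CD n₀ :=
        Submodule.mem_map_of_mem (by rw [← hMcar n₀] at hy; exact hy)
      have h2 : πD y ∈ CD m := by
        rcases le_total m n₀ with h | h
        · exact Submodule.map_mono (hMantimod h) h1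
        · have := hstab m h
          have heq : CD n₀ = CD m := this
          rw [← heq]; exact h1
      obtain ⟨z, hz, hzy⟩ := h2
      refine ⟨z, by rw [← hMcar m]; exact hz, fun d hd => ?_⟩
      have := congrFun hzy ⟨d, hd⟩
      simpa [hπD, LinearMap.funLeft_apply] using this
    obtain ⟨z, hzall, hzD⟩ := key_lemma Ss M hMcar hanti
      (fun m => (hlins m).2.2) D y hyD
    have hzS : z ∈ S := by
      rw [← hint]; exact Set.mem_iInter.2 hzall
    rw [hS] at hzS
    have h1 := hzS 1
    have heq : (fun d : ↥(D : Set G) => z (1 * (d : G)))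
        = fun d : ↥(D : Set G) => x (g * (d : G)) := by
      funext d
      rw [one_mul]
      have : z (d : G) = y (d : G) := hzD d (by exact_mod_cast d.2)
      rw [this]
    rw [heq] at h1
    exact h1
  intro w hw
  have : w ∈ ⋂ m, Ss m := by rw [hint]; exact hsubS hw
  exact Set.mem_iInter.1 this n
end

section
/- Let G be a countable group, K a field, A a finite-dimensional K-vector space, and Σ ⊆ A^G a linear subshift. If every decreasing sequence of linear subshifts of A^G intersecting to Σ eventually stabilizes, then Σ is a subshift of finite type. -/
theorem stmt5 {G K A : Type*} [Group G] [Countable G] [Field K] [AddCommGroup A]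
    [Module K A] [FiniteDimensional K A]
    (S : Set (G → A)) (hlin : IsLinearSubshift K S)
    (hstab : ∀ Ss : ℕ → Set (G → A), (∀ n, IsLinearSubshift K (Ss n)) →
      (∀ n, Ss (n + 1) ⊆ Ss n) → (⋂ n, Ss n = S) →
      ∃ n₀ : ℕ, ∀ n ≥ n₀, Ss n = Ss n₀) :
    IsSFT S := by
  classical
  obtain ⟨⟨M, hM⟩, hshift, hclosed⟩ := hlin
  have hne : Nonempty G := ⟨1⟩
  obtain ⟨f, hf⟩ := exists_surjective_nat G
  set D : ℕ → Finset G := fun n => (Finset.range n).image f with hD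
  have hDmono : ∀ m n, m ≤ n → D m ⊆ D n := fun m n h =>
    Finset.image_subset_image (Finset.range_subset_range.2 h)
  let r : ∀ n, (G → A) →ₗ[K] (↥(D n : Set G) → A) :=
    fun n => LinearMap.funLeft K A (fun d : ↥(D n : Set G) => (d : G))
  let Pm : ∀ n, Submodule K (↥(D n : Set G) → A) := fun n => M.map (r n)
  let Ss : ℕ → Set (G → A) := fun n => shiftSigma G (D n : Set G) (Pm n)
  have hPmem : ∀ n (p : ↥(D n : Set G) → A),
      p ∈ Pm n ↔ ∃ y ∈ S, (fun d : ↥(D n : Set G) => y (d : G)) = p := by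
    intro n p
    constructor
    · rintro ⟨y, hyM, rfl⟩
      exact ⟨y, by rw [← hM]; exact hyM, rfl⟩
    · rintro ⟨y, hyS, rfl⟩
      exact ⟨y, by rw [← hM] at hyS; exact hyS, rfl⟩
  -- S ⊆ each Ss n
  have hS_sub : ∀ n, S ⊆ Ss n := by
    intro n x hx g
    have hy : (fun h => x (g * h)) ∈ S := by
      have := hshift g⁻¹ x hx
      simpa using this
    exact (hPmem n _).2 ⟨fun h => x (g * h), hy, rfl⟩
  -- each Ss n is a linear subshift
  have hlins : ∀ n, IsLinearSubshift K (Ss n) := by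
    intro n
    refine ⟨?_, ?_, ?_⟩
    · refine ⟨⨅ g : G,
        (Pm n).comap (LinearMap.funLeft K A (fun d : ↥(D n : Set G) => g * (d : G))), ?_⟩
      ext x
      simp only [SetLike.mem_coe, Submodule.mem_iInf, Submodule.mem_comap]
      exact Iff.rfl
    · intro g x hx g'
      have := hx (g⁻¹ * g')
      simpa [mul_assoc] using this
    · letI : TopologicalSpace A := ⊥
      haveI : DiscreteTopology A := ⟨rfl⟩
      have hEq : Ss n = ⋂ g : G,
          (fun x : G → A => fun d : ↥(D n : Set G) => x (g * (d : G))) ⁻¹' (Pm n) := by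
        ext x
        simp only [Set.mem_iInter, Set.mem_preimage]
        exact Iff.rfl
      show IsClosed (Ss n)
      rw [hEq]
      exact isClosed_iInter fun g =>
        (isClosed_discrete _).preimage (continuous_pi fun d => continuous_apply _)
  -- decreasing
  have hdec : ∀ n, Ss (n + 1) ⊆ Ss n := by
    intro n x hx g
    obtain ⟨y, hyS, hy⟩ := (hPmem (n + 1) _).1 (hx g)
    refine (hPmem n _).2 ⟨y, hyS, ?_⟩
    funext d
    have := congrFun hy ⟨(d : G), hDmono n (n + 1) (Nat.le_succ n) d.2⟩
    exact this
  -- intersection is S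
  have hinter : (⋂ n, Ss n) = S := by
    apply Set.Subset.antisymm
    · intro x hx
      letI : TopologicalSpace A := ⊥
      haveI : DiscreteTopology A := ⟨rfl⟩
      have hclosed' : IsClosed S := hclosed
      by_contra hxS
      have hU : Sᶜ ∈ nhds x := hclosed'.isOpen_compl.mem_nhds hxS
      rw [nhds_pi] at hU
      simp only [nhds_discrete] at hU
      obtain ⟨I, hIfin, t, ht, hsub'⟩ := Filter.mem_pi.1 hU
      obtain ⟨I', hI'⟩ := hIfin.exists_finset_coe
      set n₀ := (I'.sup fun a => Classical.choose (hf a)) + 1 with hn₀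
      have hIsub : ∀ a ∈ I, a ∈ D n₀ := by
        intro a ha
        have ha' : a ∈ I' := by rw [← hI'] at ha; exact ha
        have hlt : Classical.choose (hf a) < n₀ :=
          Nat.lt_succ_of_le (Finset.le_sup (f := fun a => Classical.choose (hf a)) ha')
        exact Finset.mem_image.2
          ⟨_, Finset.mem_range.2 hlt, Classical.choose_spec (hf a)⟩
      have hx0 := (Set.mem_iInter.1 hx n₀) 1
      obtain ⟨y, hyS, hy⟩ := (hPmem n₀ _).1 hx0
      have hyPi : y ∈ I.pi t := by
        intro i hi
        have := congrFun hy ⟨i, hIsub i hi⟩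
        have hyi : y i = x i := by simpa using this
        rw [hyi]
        exact ht i
      exact (hsub' hyPi) hyS
    · exact Set.subset_iInter hS_sub
  obtain ⟨n₀, hstabeq⟩ := hstab Ss hlins hdec hinter
  have hanti : Antitone Ss := antitone_nat_of_succ_le hdec
  have hSeq : S = Ss n₀ := by
    apply Set.Subset.antisymm
    · exact hinter ▸ Set.iInter_subset Ss n₀
    · rw [← hinter]
      apply Set.subset_iInter
      intro n
      rcases le_total n n₀ with h | h
      · exact hanti h
      · exact le_of_eq (hstabeq n h).symm
  exact ⟨D n₀, Pm n₀, hSeq⟩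
end

section
/- Let G be a countable group, K a field, and A a finite-dimensional K-vector space. Then every linear subshift of A^G is of finite type if and only if A^G satisfies the descending chain condition on linear subshifts (every decreasing sequence of linear subshifts eventually stabilizes). -/
/-
Let `W₀ ⊆ W₁ ⊆ ⋯` be finite sets exhausting the countable group `G`.

If linear subshifts satisfy the descending chain condition, a linear subshift `S` is the
intersection of the decreasing sequence of subshifts of finite type `Σ(Wₖ, S|_{Wₖ})` (since `S` is
closed), so it equals one of them.

Conversely, let `(Sₙ)` be a decreasing chain of linear subshifts whose intersection is of finite
type, say `Σ(D, P)`. For each finite window `F`, the pattern spaces `Sₙ|_F` form a decreasing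
chain in the finite-dimensional space `A^F`, so they stabilize. A pattern lying in the stable
image on `F` extends to one in the stable image on any larger window; extending along the `Wₖ`
and passing to the limit (the `Sₙ` are closed) shows that stable patterns come from points of
`⋂ Sₙ`. Hence once the `D`-patterns have stabilized, every point of `Sₙ` has all its `D`-patterns
in `P`, i.e. `Sₙ = ⋂ Sₙ`.
-/

open Set Filter Topology

theorem exists_eqOn_of_eqOn_succ {α β : Type*} {W : ℕ → Set α} (hW : Monotone W)
    (hcov : ∀ a, ∃ k, a ∈ W k) (u : ℕ → α → β) (hu : ∀ k, EqOn (u (k + 1)) (u k) (W k)) :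
    ∃ z : α → β, ∀ k, EqOn z (u k) (W k) := by
  have hcompat : ∀ k j, k ≤ j → EqOn (u j) (u k) (W k) := by
    intro k j hkj
    induction j, hkj using Nat.le_induction with
    | base => exact eqOn_refl _ _
    | succ j hkj ih => exact ((hu j).mono (hW hkj)).trans ih
  choose idx hidx using hcov
  refine ⟨fun a => u (idx a) a, fun k a ha => ?_⟩
  calc u (idx a) a = u (max k (idx a)) a := (hcompat _ _ (le_max_right _ _) (hidx a)).symm
    _ = u k a := hcompat _ _ (le_max_left _ _) ha

theorem mem_of_isClosed_of_forall_exists_eqOn {G A : Type*} {S : Set (G → A)}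
    (hS : IsClosed[prodiscreteTop G A] S) {x : G → A}
    (h : ∀ F : Finset G, ∃ y ∈ S, EqOn y x F) : x ∈ S := by
  let _ : TopologicalSpace A := ⊥
  by_contra hx
  obtain ⟨I, u, hu, hsub⟩ := isOpen_pi_iff.mp hS.isOpen_compl x hx
  obtain ⟨y, hyS, hy⟩ := h I
  exact hsub (fun i hi => by rw [hy hi]; exact (hu i hi).2) hyS

section MittagLeffler

variable {G A : Type*} (S : ℕ → Set (G → A))

def InStableImage (F : Set G) (y : G → A) : Prop :=
  ∀ n, ∃ y' ∈ S n, EqOn y' y F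

variable {S}

theorem InStableImage.exists_extend
    (hML : ∀ F : Finset G, ∃ m, ∀ y ∈ S m, InStableImage S F y) {F : Set G} {y : G → A}
    (hy : InStableImage S F y) (F' : Finset G) :
    ∃ y', InStableImage S F' y' ∧ EqOn y' y F := by
  obtain ⟨m, hm⟩ := hML F'
  obtain ⟨y', hy'S, hy'⟩ := hy m
  exact ⟨y', hm y' hy'S, hy'⟩

theorem InStableImage.exists_mem_iInter [Countable G]
    (hS : ∀ n, IsClosed[prodiscreteTop G A] (S n))
    (hML : ∀ F : Finset G, ∃ m, ∀ y ∈ S m, InStableImage S F y) {F : Finset G} {y : G → A}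
    (hy : InStableImage S F y) : ∃ z ∈ ⋂ n, S n, EqOn z y F := by
  classical
  obtain ⟨W₀, hW₀mono, hW₀⟩ := exists_seq_monotone_tendsto_atTop_atTop (Finset G)
  set W : ℕ → Finset G := fun k => F ∪ W₀ k
  have hWmono : Monotone fun k => (W k : Set G) := fun k j h =>
    Finset.coe_subset.mpr (Finset.union_subset_union_right (hW₀mono h))
  have hW : ∀ F' : Finset G, ∃ k, F' ⊆ W k := fun F' => by
    obtain ⟨k, hk⟩ := tendsto_atTop_atTop.1 hW₀ F'
    exact ⟨k, (hk k le_rfl).trans Finset.subset_union_right⟩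
  obtain ⟨y₀, hy₀, hy₀y⟩ := hy.exists_extend hML (W 0)
  choose next hnext using fun k (y : {y // InStableImage S (W k) y}) =>
    y.2.exists_extend hML (W (k + 1))
  let u : (k : ℕ) → {y // InStableImage S (W k) y} :=
    fun k => Nat.rec ⟨y₀, hy₀⟩ (fun k y => ⟨next k y, (hnext k y).1⟩) k
  obtain ⟨z, hz⟩ := exists_eqOn_of_eqOn_succ hWmono
    (fun g => (hW {g}).imp fun _ h => Finset.singleton_subset_iff.mp h) (fun k => (u k).1)
    (fun k => (hnext k (u k)).2)
  refine ⟨z, mem_iInter.mpr fun n => mem_of_isClosed_of_forall_exists_eqOn (hS n) fun F' => ?_,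
    fun g hg => (hz 0 (Finset.subset_union_left hg)).trans (hy₀y hg)⟩
  obtain ⟨k, hk⟩ := hW F'
  obtain ⟨y', hy'S, hy'⟩ := (u k).2 n
  exact ⟨y', hy'S, fun g hg => (hy' (hk hg)).trans (hz k (hk hg)).symm⟩

end MittagLeffler

section LinearSubshift

variable (K : Type*) {G A : Type*} [Field K] [AddCommGroup A] [Module K A]

def patterns (M : Submodule K (G → A)) (D : Set G) : Submodule K (D → A) :=
  M.map (LinearMap.funLeft K A ((↑) : D → G))

variable {K}

theorem mem_patterns {M : Submodule K (G → A)} {D : Set G} {p : D → A} :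
    p ∈ patterns K M D ↔ ∃ y ∈ M, ∀ d : D, y d = p d := by
  simp only [patterns, Submodule.mem_map, LinearMap.funLeft_apply, funext_iff]

theorem exists_forall_inStableImage_of_antitone [FiniteDimensional K A]
    {M : ℕ → Submodule K (G → A)} (hM : Antitone M) (F : Finset G) :
    ∃ m, ∀ y ∈ M m, InStableImage (fun n => (M n : Set (G → A))) F y := by
  obtain ⟨m, hm⟩ := IsArtinian.monotone_stabilizes (R := K)
    ⟨fun n => OrderDual.toDual (patterns K (M n) F), fun _ _ h => Submodule.map_mono (hM h)⟩
  refine ⟨m, fun y hy n => ?_⟩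
  rcases le_total n m with hnm | hmn
  · exact ⟨y, hM hnm hy, eqOn_refl _ _⟩
  · have hstab : patterns K (M m) F = patterns K (M n) F := hm n hmn
    have hpat : (fun d : (F : Set G) => y d) ∈ patterns K (M n) F :=
      hstab ▸ mem_patterns.mpr ⟨y, hy, fun _ => rfl⟩
    obtain ⟨y', hy', hy'y⟩ := mem_patterns.mp hpat
    exact ⟨y', hy', fun g hg => hy'y ⟨g, hg⟩⟩

variable [Group G]

theorem isLinearSubshift_shiftSigma (D : Finset G) (P : Submodule K (↥(D : Set G) → A)) :
    IsLinearSubshift K (shiftSigma G (D : Set G) (P : Set (↥(D : Set G) → A))) := by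
  refine ⟨⟨⨅ g : G, P.comap (LinearMap.funLeft K A fun d : (D : Set G) => g * d), ?_⟩, ?_, ?_⟩
  · ext x
    simp only [SetLike.mem_coe, Submodule.mem_iInf, Submodule.mem_comap]
    rfl
  · intro g x hx g'
    simpa only [mul_assoc] using hx (g⁻¹ * g')
  · let _ : TopologicalSpace A := ⊥
    have : DiscreteTopology A := ⟨rfl⟩
    have hrw : shiftSigma G (D : Set G) (P : Set (↥(D : Set G) → A)) =
        ⋂ g : G, (fun x : G → A => fun d : (D : Set G) => x (g * d)) ⁻¹' P :=
      Set.ext fun _ => by simp [shiftSigma]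
    rw [hrw]
    exact isClosed_iInter fun g =>
      (isClosed_discrete _).preimage (continuous_pi fun d => continuous_apply _)

theorem IsLinearSubshift.iInter {ι : Type*} {S : ι → Set (G → A)}
    (hS : ∀ i, IsLinearSubshift K (S i)) : IsLinearSubshift K (⋂ i, S i) := by
  choose M hM using fun i => (hS i).1
  refine ⟨⟨⨅ i, M i, by simp [hM]⟩, fun g x hx => mem_iInter.mpr fun i =>
    (hS i).2.1 g x (mem_iInter.mp hx i), ?_⟩
  let _ := prodiscreteTop G A
  exact isClosed_iInter fun i => (hS i).2.2

theorem subset_shiftSigma_patterns {M : Submodule K (G → A)}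
    (hM : ∀ g : G, ∀ x ∈ (M : Set (G → A)), (fun h => x (g⁻¹ * h)) ∈ (M : Set (G → A)))
    (D : Set G) : (M : Set (G → A)) ⊆ shiftSigma G D (patterns K M D : Set (D → A)) :=
  fun x hx g => mem_patterns.mpr ⟨fun h => x (g * h), by simpa using hM g⁻¹ x hx, fun _ => rfl⟩

theorem shiftSigma_patterns_anti {M : Submodule K (G → A)} {D D' : Set G} (h : D ⊆ D') :
    shiftSigma G D' (patterns K M D' : Set (D' → A)) ⊆
      shiftSigma G D (patterns K M D : Set (D → A)) := by
  intro x hx g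
  obtain ⟨y, hy, hyx⟩ := mem_patterns.mp (hx g)
  exact mem_patterns.mpr ⟨y, hy, fun d => hyx (inclusion h d)⟩

theorem exists_mem_eqOn_of_mem_shiftSigma_patterns {M : Submodule K (G → A)} {D : Set G}
    {x : G → A} (hx : x ∈ shiftSigma G D (patterns K M D : Set (D → A))) :
    ∃ y ∈ M, EqOn y x D := by
  obtain ⟨y, hy, hyx⟩ := mem_patterns.mp (hx 1)
  exact ⟨y, hy, fun g hg => by simpa using hyx ⟨g, hg⟩⟩

theorem isSFT_of_dcc [Countable G]
    (hdcc : ∀ Ss : ℕ → Set (G → A), (∀ n, IsLinearSubshift K (Ss n)) →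
      (∀ n, Ss (n + 1) ⊆ Ss n) → ∃ n₀ : ℕ, ∀ n ≥ n₀, Ss n = Ss n₀)
    {S : Set (G → A)} (hS : IsLinearSubshift K S) : IsSFT S := by
  obtain ⟨⟨M, rfl⟩, hinv, hcl⟩ := hS
  obtain ⟨W, hWmono, hW⟩ := exists_seq_monotone_tendsto_atTop_atTop (Finset G)
  let Sig k := shiftSigma G (W k : Set G) (patterns K M (W k) : Set (↥(W k : Set G) → A))
  obtain ⟨n₀, hn₀⟩ := hdcc Sig (fun k => isLinearSubshift_shiftSigma _ _)
    (fun k => shiftSigma_patterns_anti (Finset.coe_subset.mpr (hWmono k.le_succ)))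
  refine ⟨W n₀, _, (subset_shiftSigma_patterns hinv _).antisymm fun x hx =>
    mem_of_isClosed_of_forall_exists_eqOn hcl fun F => ?_⟩
  obtain ⟨k, hk⟩ := tendsto_atTop_atTop.1 hW F
  have hxk : x ∈ Sig (max k n₀) := (hn₀ _ (le_max_right _ _)).symm ▸ hx
  obtain ⟨y, hy, hyx⟩ := exists_mem_eqOn_of_mem_shiftSigma_patterns hxk
  exact ⟨y, hy, hyx.mono (Finset.coe_subset.mpr (hk _ (le_max_left _ _)))⟩

theorem exists_eq_of_antitone_of_isSFT_iInter [Countable G] [FiniteDimensional K A]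
    {Ss : ℕ → Set (G → A)} (hSs : ∀ n, IsLinearSubshift K (Ss n)) (hanti : Antitone Ss)
    (hsft : IsSFT (⋂ n, Ss n)) : ∃ n₀, ∀ n ≥ n₀, Ss n = Ss n₀ := by
  choose M hM using fun n => (hSs n).1
  obtain rfl : (fun n => (M n : Set (G → A))) = Ss := funext hM
  obtain ⟨D, P, hD⟩ := hsft
  have hManti : Antitone M := fun _ _ h => SetLike.coe_subset_coe.mp (hanti h)
  have hML := exists_forall_inStableImage_of_antitone hManti
  obtain ⟨m, hm⟩ := hML D
  have hstage : (M m : Set (G → A)) ⊆ ⋂ n, (M n : Set (G → A)) := by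
    intro x hx
    rw [hD]
    intro g
    have hy : (fun h => x (g * h)) ∈ (M m : Set (G → A)) := by simpa using (hSs m).2.1 g⁻¹ x hx
    obtain ⟨z, hz, hzy⟩ := (hm _ hy).exists_mem_iInter (fun n => (hSs n).2.2) hML
    rw [hD] at hz
    convert hz 1 using 1
    funext d
    simpa using (hzy d.2).symm
  exact ⟨m, fun n hn => (hanti hn).antisymm (hstage.trans (iInter_subset _ n))⟩

end LinearSubshift

theorem stmt6 {G : Type*} (K A : Type*) [Group G] [Countable G] [Field K]
    [AddCommGroup A] [Module K A] [FiniteDimensional K A] :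
    (∀ S : Set (G → A), IsLinearSubshift K S → IsSFT S) ↔
      (∀ Ss : ℕ → Set (G → A), (∀ n, IsLinearSubshift K (Ss n)) →
        (∀ n, Ss (n + 1) ⊆ Ss n) → ∃ n₀ : ℕ, ∀ n ≥ n₀, Ss n = Ss n₀) :=
  ⟨fun hsft _ hSs hdec => exists_eq_of_antitone_of_isSFT_iInter hSs
      (antitone_nat_of_succ_le hdec) (hsft _ (IsLinearSubshift.iInter hSs)),
    fun hdcc _ hS => isSFT_of_dcc hdcc hS⟩
end

section
/- Let G be a group, K a field, A a K-vector space, and Σ ⊆ A^G a linear subshift. Then (Σ^⊥)^⊥ = Σ, where Σ^⊥ = {τ ∈ LCA(G,A) : Σ ⊆ ker τ} and Γ^⊥ = ⋂_{τ∈Γ} ker τ for Γ ⊆ LCA(G,A). -/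
/-! Let `x ∉ Σ`. Since `Σ` is closed, some finite window `I ⊆ G` already witnesses this:
`x|_I` lies outside the subspace `Σ|_I` of `A^I`. A linear functional `f` on `A^I` vanishing
on `Σ|_I` but not at `x|_I`, times a nonzero value `a` of `x`, is a linear local rule; the cellular
automaton it defines kills `Σ` by shift invariance, but not `x`. -/

open scoped Topology

theorem exists_finset_forall_exists_ne_of_isClosed {G A : Type*} {S : Set (G → A)}
    (hS : IsClosed[prodiscreteTop G A] S) {x : G → A} (hx : x ∉ S) :
    ∃ I : Finset G, ∀ y ∈ S, ∃ i ∈ I, y i ≠ x i := by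
  let _ : TopologicalSpace A := ⊥
  obtain ⟨I, u, hu, hIu⟩ := isOpen_pi_iff.mp hS.isOpen_compl x hx
  refine ⟨I, fun y hy => ?_⟩
  by_contra! hyx
  exact hIu (fun i hi => hyx i hi ▸ (hu i hi).2) hy

section LinearCA

variable {K G A : Type*} [Field K] [Group G] [AddCommGroup A] [Module K A]

variable (K) in
def linearCA (M : Finset G) (μ : (↥(M : Set G) → A) →ₗ[K] A) : (G → A) →ₗ[K] (G → A) :=
  LinearMap.pi fun g => μ ∘ₗ LinearMap.funLeft K A fun m : ↥(M : Set G) => g * m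

theorem linearCA_apply (M : Finset G) (μ : (↥(M : Set G) → A) →ₗ[K] A) (x : G → A) (g : G) :
    linearCA K M μ x g = μ fun m : ↥(M : Set G) => x (g * m) :=
  rfl

theorem isLCA_linearCA (M : Finset G) (μ : (↥(M : Set G) → A) →ₗ[K] A) :
    IsLCA K (linearCA K M μ) :=
  ⟨(linearCA K M μ).isLinear, M, μ, μ.isLinear, fun _ _ => rfl⟩

theorem IsLinearSubshift.exists_isLCA_separating {S : Set (G → A)} (hS : IsLinearSubshift K S)
    {x : G → A} (hx : x ∉ S) :
    ∃ τ : (G → A) → (G → A), IsLCA K τ ∧ (∀ y ∈ S, τ y = 0) ∧ τ x ≠ 0 := by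
  obtain ⟨⟨M, rfl⟩, hshift, hclosed⟩ := hS
  obtain ⟨I, hI⟩ := exists_finset_forall_exists_ne_of_isClosed hclosed hx
  let r := LinearMap.funLeft K A ((↑) : ↥(I : Set G) → G)
  have hrx : r x ∉ M.map r := by
    rintro ⟨y, hy, hyx⟩
    obtain ⟨i, hi, hne⟩ := hI y hy
    exact hne (congrFun hyx ⟨i, hi⟩)
  obtain ⟨f, hfx, hfM⟩ := Submodule.exists_dual_map_eq_bot_of_notMem hrx inferInstance
  obtain ⟨g₀, hg₀⟩ : ∃ g, x g ≠ 0 := Function.ne_iff.mp fun h => hx (h ▸ M.zero_mem)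
  refine ⟨linearCA K I (f.smulRight (x g₀)), isLCA_linearCA I _, fun y hy => ?_, fun h => ?_⟩
  · ext g
    have hgy : (fun h => y (g * h)) ∈ M := by simpa using hshift g⁻¹ y hy
    have hf : f (r fun h => y (g * h)) = 0 := by
      simpa [hfM] using Submodule.mem_map_of_mem (f := f) (Submodule.mem_map_of_mem (f := r) hgy)
    change f (r fun h => y (g * h)) • x g₀ = 0
    rw [hf, zero_smul]
  · have h₁ := congrFun h 1
    rw [linearCA_apply, LinearMap.smulRight_apply] at h₁
    simp only [one_mul] at h₁
    exact (smul_eq_zero.mp h₁).elim hfx hg₀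

end LinearCA

theorem stmt9 {G K A : Type*} [Group G] [Field K] [AddCommGroup A] [Module K A]
    (S : Set (G → A)) (hlin : IsLinearSubshift K S) :
    {x : G → A | ∀ τ : (G → A) → (G → A),
      IsLCA K τ → (∀ y ∈ S, τ y = 0) → τ x = 0} = S := by
  refine Set.Subset.antisymm (fun x hx => ?_) fun x hx τ _ hτ => hτ x hx
  by_contra hxS
  obtain ⟨τ, hτ, hτS, hτx⟩ := hlin.exists_isLCA_separating hxS
  exact hτx (hx τ hτ hτS)
end

section
/- Let G be a countable group and K a field. If G is of K-linear Markov type, then the group algebra K[G] is one-sided Noetherian. -/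
namespace Subspace

variable {K V : Type*} [Field K] [AddCommGroup V] [Module K V]

theorem exists_mem_dualAnnihilator_eqOn_of_inf_le {W W' E : Subspace K V} (h : W' ⊓ E ≤ W)
    {φ : Module.Dual K V} (hφ : φ ∈ W.dualAnnihilator) :
    ∃ ψ ∈ W'.dualAnnihilator, ∀ v ∈ E, ψ v = φ v := by
  have hφ' : φ ∈ W'.dualAnnihilator ⊔ E.dualAnnihilator := by
    rw [← dualAnnihilator_inf_eq]
    exact Submodule.dualAnnihilator_anti h hφ
  obtain ⟨ψ, hψ, χ, hχ, rfl⟩ := Submodule.mem_sup.1 hφ'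
  refine ⟨ψ, hψ, fun v hv => ?_⟩
  rw [LinearMap.add_apply, (Submodule.mem_dualAnnihilator χ).1 hχ v hv, add_zero]

end Subspace

theorem mem_shiftSigma_of_forall_exists {G A : Type*} [Group G] {D : Set G} {P : Set (D → A)}
    {x : G → A} (hx : ∀ g : G, ∃ y ∈ shiftSigma G D P, ∀ d ∈ D, y d = x (g * d)) :
    x ∈ shiftSigma G D P := by
  intro g
  obtain ⟨y, hy, hyx⟩ := hx g
  simpa only [one_mul, hyx _ (Subtype.prop _)] using hy 1

noncomputable section

namespace MonoidAlgebra

variable {K G : Type*}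

def funEquivDual [CommSemiring K] [Monoid G] :
    (G → K) ≃ₗ[K] Module.Dual K (MonoidAlgebra K G) :=
  (MonoidAlgebra.basis G K).constr K

@[simp]
theorem funEquivDual_single_one [CommSemiring K] [Monoid G] (x : G → K) (g : G) :
    funEquivDual x (single g 1 : MonoidAlgebra K G) = x g :=
  (MonoidAlgebra.basis G K).constr_basis K x g

@[simp]
theorem funEquivDual_symm_apply [CommSemiring K] [Monoid G] (φ : Module.Dual K (MonoidAlgebra K G))
    (g : G) : funEquivDual.symm φ g = φ (single g 1) :=
  rfl

theorem funEquivDual_apply [CommSemiring K] [Monoid G] (x : G → K) (a : MonoidAlgebra K G) :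
    funEquivDual x a = ∑ g ∈ a.coeff.support, a.coeff g * x g :=
  (MonoidAlgebra.basis G K).constr_apply K x a

theorem funEquivDual_single_one_mul [CommSemiring K] [Monoid G] (x : G → K) (g : G)
    (a : MonoidAlgebra K G) :
    funEquivDual x (single g 1 * a) = funEquivDual (fun h => x (g * h)) a := by
  change ((funEquivDual x).comp (LinearMap.mulLeft K (single g 1))) a = _
  congr 1
  refine (MonoidAlgebra.basis G K).ext fun h => ?_
  simp [single_mul_single]

def funAnnihilator [CommSemiring K] [Monoid G] (V : Submodule K (MonoidAlgebra K G)) :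
    Submodule K (G → K) :=
  V.dualAnnihilator.comap funEquivDual.toLinearMap

theorem mem_funAnnihilator [CommSemiring K] [Monoid G] {V : Submodule K (MonoidAlgebra K G)}
    {x : G → K} : x ∈ funAnnihilator V ↔ ∀ a ∈ V, funEquivDual x a = 0 :=
  Submodule.mem_dualAnnihilator _

theorem forall_mem_funAnnihilator_iff [Field K] [Monoid G] (V : Submodule K (MonoidAlgebra K G))
    (a : MonoidAlgebra K G) : (∀ x ∈ funAnnihilator V, funEquivDual x a = 0) ↔ a ∈ V := by
  rw [← Subspace.forall_mem_dualAnnihilator_apply_eq_zero_iff, funEquivDual.forall_congr_left]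
  simp [funAnnihilator]

theorem isClosed_funAnnihilator [CommSemiring K] [Monoid G] (V : Submodule K (MonoidAlgebra K G)) :
    @IsClosed _ (prodiscreteTop G K) (funAnnihilator V : Set (G → K)) := by
  let _ : TopologicalSpace K := ⊥
  have : DiscreteTopology K := ⟨rfl⟩
  change IsClosed (funAnnihilator V : Set (G → K))
  have hcoe : (funAnnihilator V : Set (G → K)) = ⋂ a ∈ V, {x | funEquivDual x a = 0} := by
    ext x
    simp [mem_funAnnihilator]
  rw [hcoe]
  refine isClosed_biInter fun a _ => (isClosed_discrete {0}).preimage ?_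
  simp only [funEquivDual_apply]
  fun_prop

theorem shift_mem_funAnnihilator [CommSemiring K] [Monoid G]
    (I : Submodule (MonoidAlgebra K G) (MonoidAlgebra K G)) {x : G → K}
    (hx : x ∈ funAnnihilator (I.restrictScalars K)) (g : G) :
    (fun h => x (g * h)) ∈ funAnnihilator (I.restrictScalars K) := by
  rw [mem_funAnnihilator] at hx ⊢
  intro a ha
  rw [← funEquivDual_single_one_mul]
  exact hx _ (I.smul_mem (single g 1) ha)

theorem isLinearSubshift_funAnnihilator [Field K] [Group G]
    (I : Submodule (MonoidAlgebra K G) (MonoidAlgebra K G)) :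
    IsLinearSubshift K (funAnnihilator (I.restrictScalars K) : Set (G → K)) :=
  ⟨⟨_, rfl⟩, fun g _ hx => shift_mem_funAnnihilator I hx g⁻¹, isClosed_funAnnihilator _⟩

theorem exists_mem_funAnnihilator_eqOn [Field K] [Monoid G] {V V' : Submodule K (MonoidAlgebra K G)}
    {D : Set G} (h : V' ⊓ supported K K D ≤ V) {x : G → K} (hx : x ∈ funAnnihilator V) :
    ∃ y ∈ funAnnihilator V', ∀ d ∈ D, y d = x d := by
  obtain ⟨ψ, hψ, hψx⟩ := Subspace.exists_mem_dualAnnihilator_eqOn_of_inf_le h hx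
  refine ⟨funEquivDual.symm ψ, by simpa [funAnnihilator] using hψ, fun d hd => ?_⟩
  have hsingle : (single d 1 : MonoidAlgebra K G) ∈ supported K K D := by
    rw [supported_eq_span_single]
    exact Submodule.subset_span ⟨d, hd, rfl⟩
  simpa using hψx _ hsingle

theorem eq_span_inf_supported_of_funAnnihilator_eq_shiftSigma [Field K] [Group G]
    {I : Submodule (MonoidAlgebra K G) (MonoidAlgebra K G)} {D : Set G} {P : Set (D → K)}
    (hI : (funAnnihilator (I.restrictScalars K) : Set (G → K)) = shiftSigma G D P) :
    I = Submodule.span (MonoidAlgebra K G) ↑(I.restrictScalars K ⊓ supported K K D) := by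
  refine le_antisymm (fun a ha => ?_) (Submodule.span_le.2 fun a ha => ha.1)
  rw [← Submodule.restrictScalars_mem K, ← forall_mem_funAnnihilator_iff]
  intro x hx
  suffices hxI : x ∈ (funAnnihilator (I.restrictScalars K) : Set (G → K)) from
    mem_funAnnihilator.1 hxI a ha
  rw [hI]
  refine mem_shiftSigma_of_forall_exists fun g => ?_
  obtain ⟨y, hy, hyx⟩ := exists_mem_funAnnihilator_eqOn
    (fun _ hb => Submodule.subset_span (R := MonoidAlgebra K G) hb)
    (shift_mem_funAnnihilator _ hx g)
  exact ⟨y, hI ▸ hy, hyx⟩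

end MonoidAlgebra

open MonoidAlgebra in
theorem stmt11_general {G : Type} (K : Type) [Group G] [Field K]
    (hMarkov : ∀ (A : Type) (_ : AddCommGroup A) (_ : Module K A),
      FiniteDimensional K A → ∀ S : Set (G → A), IsLinearSubshift K S → IsSFT S) :
    IsNoetherianRing (MonoidAlgebra K G) := by
  refine ⟨fun I => ?_⟩
  obtain ⟨D, P, hSFT⟩ := hMarkov K inferInstance inferInstance inferInstance _
    (isLinearSubshift_funAnnihilator I)
  have hfg : (I.restrictScalars K ⊓ supported K K (D : Set G)).FG :=
    (Submodule.fg_span (D.finite_toSet.image _)).of_le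
      (inf_le_right.trans (supported_eq_span_single K (D : Set G)).le)
  obtain ⟨T, hT⟩ := hfg
  use T
  rw [eq_span_inf_supported_of_funAnnihilator_eq_shiftSigma hSFT, ← hT,
    Submodule.span_span_of_tower]

theorem stmt11 {G : Type} (K : Type) [Group G] [Countable G] [Field K]
    (hMarkov : ∀ (A : Type) (_ : AddCommGroup A) (_ : Module K A),
      FiniteDimensional K A → ∀ S : Set (G → A), IsLinearSubshift K S → IsSFT S) :
    IsNoetherianRing (MonoidAlgebra K G) :=
  stmt11_general K hMarkov
end
end

section
/- Let G be a group, K a field, A a finite-dimensional K-vector space, Σ ⊆ A^G a linear subshift, and τ : A^G → A^G a linear cellular automaton. Then τ(Σ) is a linear subshift of A^G; in particular τ(Σ) is closed in the prodiscrete topology. -/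
/-!
The image `τ '' S` is a subspace because `τ` is linear, and it is shift invariant because `τ`
commutes with the shifts. For closedness, let `y` lie in the closure of `τ '' S`. For each finite
`F ⊆ G` the configurations `x ∈ S` with `τ x = y` on `F` form a nonempty closed affine subspace
`C F`, and these form a filter base. Since `A` is finite-dimensional, `G → A` is linearly compact:
extend the base to a maximal one by Zorn's lemma; for each `g` the images of its members under
`x ↦ x g` are affine subspaces of `A` with a least element (dimensions cannot decrease forever),
and a point `a g` of that least element is attained in every member, so by maximality the
condition `x g = a g` can be added to the base. Then `a` lies in the closure of every `C F`,
hence in every `C F`, and `τ a = y`.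
-/

open Module

namespace AffineSubspace

section Ring

variable {K V W : Type*} [Ring K] [AddCommGroup V] [Module K V] [AddCommGroup W] [Module K W]

def IsFilterBase (𝓑 : Set (AffineSubspace K V)) : Prop :=
  (∀ s ∈ 𝓑, (s : Set V).Nonempty) ∧ DirectedOn (· ≥ ·) 𝓑

theorem IsFilterBase.sUnion {c : Set (Set (AffineSubspace K V))} (hc : IsChain (· ⊆ ·) c)
    (h : ∀ 𝓑 ∈ c, IsFilterBase 𝓑) : IsFilterBase (⋃₀ c) :=
  ⟨fun _ ⟨𝓑, h𝓑, hs⟩ => (h 𝓑 h𝓑).1 _ hs,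
    Set.directedOn_sUnion hc.directedOn fun 𝓑 h𝓑 => (h 𝓑 h𝓑).2⟩

theorem IsFilterBase.exists_maximal {𝓑 : Set (AffineSubspace K V)} (h : IsFilterBase 𝓑) :
    ∃ 𝓜, 𝓑 ⊆ 𝓜 ∧ Maximal IsFilterBase 𝓜 :=
  zorn_subset_nonempty {𝓑 | IsFilterBase 𝓑}
    (fun c hc hchain _ => ⟨⋃₀ c, .sUnion hchain hc, fun _ => Set.subset_sUnion_of_mem⟩) 𝓑 h

theorem IsFilterBase.image_map {𝓑 : Set (AffineSubspace K V)} (h : IsFilterBase 𝓑)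
    (f : V →ᵃ[K] W) : IsFilterBase (map f '' 𝓑) := by
  refine ⟨?_, ?_⟩
  · rintro - ⟨s, hs, rfl⟩
    rw [coe_map]
    exact (h.1 s hs).image f
  · rintro - ⟨s₁, hs₁, rfl⟩ - ⟨s₂, hs₂, rfl⟩
    obtain ⟨s₃, hs₃, h₁, h₂⟩ := h.2 s₁ hs₁ s₂ hs₂
    exact ⟨map f s₃, ⟨s₃, hs₃, rfl⟩, map_mono f h₁, map_mono f h₂⟩

theorem IsFilterBase.inf_mem_of_maximal {𝓜 : Set (AffineSubspace K V)}
    (h : Maximal IsFilterBase 𝓜) {t : AffineSubspace K V}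
    (ht : ∀ s ∈ 𝓜, ((s ⊓ t : AffineSubspace K V) : Set V).Nonempty) {s : AffineSubspace K V}
    (hs : s ∈ 𝓜) : s ⊓ t ∈ 𝓜 := by
  let 𝓜' := {u : AffineSubspace K V | (u : Set V).Nonempty ∧ ∃ s ∈ 𝓜, s ⊓ t ≤ u}
  have hbase : IsFilterBase 𝓜' := by
    refine ⟨fun u hu => hu.1, ?_⟩
    rintro u₁ ⟨-, s₁, hs₁, h₁⟩ u₂ ⟨-, s₂, hs₂, h₂⟩
    obtain ⟨s₃, hs₃, h₃₁, h₃₂⟩ := h.prop.2 s₁ hs₁ s₂ hs₂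
    exact ⟨s₃ ⊓ t, ⟨ht s₃ hs₃, s₃, hs₃, le_rfl⟩,
      (inf_le_inf_right t h₃₁).trans h₁, (inf_le_inf_right t h₃₂).trans h₂⟩
  exact h.2 hbase (fun s hs => ⟨h.prop.1 s hs, s, hs, inf_le_left⟩) ⟨ht s hs, s, hs, le_rfl⟩

variable {ι : Type*} {A : ι → Type*} [∀ i, AddCommGroup (A i)] [∀ i, Module K (A i)]

variable (K) in
def eqOn (E : Set ι) (a : ∀ i, A i) : AffineSubspace K (∀ i, A i) :=
  mk' a (⨅ i ∈ E, LinearMap.ker (LinearMap.proj i))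

theorem mem_eqOn {E : Set ι} {a x : ∀ i, A i} : x ∈ eqOn K E a ↔ ∀ i ∈ E, x i = a i := by
  simp [eqOn, sub_eq_zero]

theorem coe_eqOn (E : Set ι) (a : ∀ i, A i) :
    (eqOn K E a : Set (∀ i, A i)) = E.pi fun i => {a i} :=
  Set.ext fun _ => mem_eqOn

theorem eqOn_anti {E E' : Set ι} (h : E ⊆ E') (a : ∀ i, A i) : eqOn K E' a ≤ eqOn K E a := by
  intro x hx
  simp only [← SetLike.mem_coe, coe_eqOn] at hx ⊢
  exact Set.pi_mono' (fun _ _ => le_rfl) h hx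

end Ring

section DivisionRing

variable {K V : Type*} [DivisionRing K] [AddCommGroup V] [Module K V]

theorem exists_forall_le_of_directedOn [FiniteDimensional K V] {𝓒 : Set (AffineSubspace K V)}
    (hne : 𝓒.Nonempty) (hmem : ∀ s ∈ 𝓒, (s : Set V).Nonempty) (hdir : DirectedOn (· ≥ ·) 𝓒) :
    ∃ s ∈ 𝓒, ∀ t ∈ 𝓒, s ≤ t := by
  obtain ⟨s, hs, hmin⟩ :=
    (measure fun s : AffineSubspace K V => finrank K s.direction).wf.has_min 𝓒 hne
  refine ⟨s, hs, fun t ht => ?_⟩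
  obtain ⟨u, hu, hus, hut⟩ := hdir s hs t ht
  obtain rfl : u = s := by
    by_contra hus'
    exact hmin u hu <| Submodule.finrank_lt_finrank_of_lt <|
      direction_lt_of_nonempty (lt_of_le_of_ne hus hus') (hmem u hu)
  exact hut

variable {ι : Type*} {A : ι → Type*} [∀ i, AddCommGroup (A i)] [∀ i, Module K (A i)]
  [∀ i, FiniteDimensional K (A i)]

theorem IsFilterBase.exists_forall_exists_apply_eq
    {𝓑 : Set (AffineSubspace K (∀ i, A i))} (h : IsFilterBase 𝓑) (hne : 𝓑.Nonempty) (i : ι) :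
    ∃ a : A i, ∀ s ∈ 𝓑, ∃ x ∈ s, x i = a := by
  have himage := h.image_map (LinearMap.proj i : (∀ i, A i) →ₗ[K] A i).toAffineMap
  obtain ⟨s₀, hs₀, hmin⟩ := exists_forall_le_of_directedOn (hne.image _) himage.1 himage.2
  obtain ⟨a, ha⟩ := himage.1 s₀ hs₀
  exact ⟨a, fun s hs => mem_map.1 (hmin _ ⟨s, hs, rfl⟩ ha)⟩

theorem IsFilterBase.exists_forall_exists_eqOn_of_maximal
    {𝓜 : Set (AffineSubspace K (∀ i, A i))} (h : Maximal IsFilterBase 𝓜) (hne : 𝓜.Nonempty) :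
    ∃ a : ∀ i, A i, ∀ E : Finset ι, ∀ s ∈ 𝓜, ∃ x ∈ s, ∀ i ∈ E, x i = a i := by
  choose a ha using h.prop.exists_forall_exists_apply_eq hne
  refine ⟨a, fun E => ?_⟩
  classical
  induction E using Finset.induction_on with
  | empty => exact fun s hs => (h.prop.1 s hs).imp fun x hx => ⟨hx, by simp⟩
  | insert j E _ ih =>
    intro s hs
    have hmeet : ∀ t ∈ 𝓜,
        ((t ⊓ eqOn K {j} a : AffineSubspace K _) : Set (∀ i, A i)).Nonempty := by
      intro t ht
      obtain ⟨x, hxt, hxj⟩ := ha j t ht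
      exact ⟨x, hxt, mem_eqOn.2 fun i hi => (Set.mem_singleton_iff.1 hi) ▸ hxj⟩
    obtain ⟨x, hx, hxE⟩ := ih _ (IsFilterBase.inf_mem_of_maximal h hmeet hs)
    rw [mem_inf_iff, mem_eqOn] at hx
    exact ⟨x, hx.1, (Finset.forall_mem_insert ..).2 ⟨hx.2 j rfl, hxE⟩⟩

theorem IsFilterBase.exists_forall_mem_closure [∀ i, TopologicalSpace (A i)]
    {𝓑 : Set (AffineSubspace K (∀ i, A i))} (h : IsFilterBase 𝓑) (hne : 𝓑.Nonempty) :
    ∃ a : ∀ i, A i, ∀ s ∈ 𝓑, a ∈ closure (s : Set (∀ i, A i)) := by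
  obtain ⟨𝓜, h𝓑𝓜, h𝓜⟩ := h.exists_maximal
  obtain ⟨a, ha⟩ := IsFilterBase.exists_forall_exists_eqOn_of_maximal h𝓜 (hne.mono h𝓑𝓜)
  refine ⟨a, fun s hs => mem_closure_iff_nhds.2 fun t ht => ?_⟩
  rw [nhds_pi, Filter.mem_pi] at ht
  obtain ⟨I, hI, u, hu, hIu⟩ := ht
  obtain ⟨x, hxs, hxa⟩ := ha hI.toFinset s (h𝓑𝓜 hs)
  exact ⟨x, hIu fun i hi => hxa i (hI.mem_toFinset.2 hi) ▸ mem_of_mem_nhds (hu i), hxs⟩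

theorem isClosed_image_of_continuous {κ B : Type*} [∀ i, TopologicalSpace (A i)]
    [AddCommGroup B] [Module K B] [TopologicalSpace B] [DiscreteTopology B]
    (f : (∀ i, A i) →ᵃ[K] (κ → B)) (hf : Continuous f) {S : AffineSubspace K (∀ i, A i)}
    (hS : IsClosed (S : Set (∀ i, A i))) : IsClosed (f '' S) := by
  classical
  refine closure_subset_iff_isClosed.1 fun y hy => ?_
  let C : Finset κ → AffineSubspace K (∀ i, A i) := fun E => S ⊓ (eqOn K (E : Set κ) y).comap f
  have hC : ∀ E, (C E : Set (∀ i, A i)) =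
      (S : Set (∀ i, A i)) ∩ f ⁻¹' ((E : Set κ).pi fun k => {y k}) := fun E => by ext; simp [C, mem_inf_iff, mem_comap, mem_eqOn]
  have hbase : IsFilterBase (Set.range C) := by
    refine ⟨?_, ?_⟩
    · rintro - ⟨E, rfl⟩
      obtain ⟨-, hyE, x, hxS, rfl⟩ := mem_closure_iff.1 hy ((E : Set κ).pi fun k => {y k})
        (isOpen_set_pi E.finite_toSet fun _ _ => isOpen_discrete _) fun _ _ => rfl
      exact ⟨x, by rw [hC]; exact ⟨hxS, hyE⟩⟩
    · rintro - ⟨E₁, rfl⟩ - ⟨E₂, rfl⟩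
      exact ⟨C (E₁ ∪ E₂), ⟨_, rfl⟩,
        inf_le_inf_left _ (comap_mono (eqOn_anti (by simp) y)),
        inf_le_inf_left _ (comap_mono (eqOn_anti (by simp) y))⟩
  obtain ⟨a, ha⟩ := hbase.exists_forall_mem_closure (Set.range_nonempty C)
  have haC : ∀ E : Finset κ, a ∈ S ∧ ∀ k ∈ E, f a k = y k := by
    intro E
    have hclosed : IsClosed (C E : Set (∀ i, A i)) := by
      rw [hC]
      exact hS.inter ((isClosed_set_pi fun _ _ => isClosed_singleton).preimage hf)
    have haE := hclosed.closure_eq ▸ ha _ ⟨E, rfl⟩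
    rw [hC] at haE
    exact haE
  exact ⟨a, (haC ∅).1, funext fun k => (haC {k}).2 k (Finset.mem_singleton_self k)⟩

end DivisionRing

end AffineSubspace

section CellularAutomaton

variable {G A : Type*} [Group G] {τ : (G → A) → (G → A)} {M : Finset G}
  {μ : (↥(M : Set G) → A) → A}

theorem shift_comm_of_local_rule (hτ : ∀ x g, τ x g = μ fun m : (M : Set G) => x (g * m))
    (g : G) (x : G → A) : τ (fun h => x (g⁻¹ * h)) = fun h => τ x (g⁻¹ * h) := by
  funext h
  simp only [hτ, mul_assoc]

theorem continuous_of_local_rule [TopologicalSpace A] [DiscreteTopology A]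
    (hτ : ∀ x g, τ x g = μ fun m : (M : Set G) => x (g * m)) : Continuous τ :=
  continuous_pi fun g => by
    simp only [hτ]
    exact continuous_of_discreteTopology.comp (continuous_pi fun m => continuous_apply _)

end CellularAutomaton

theorem stmt13 {G K A : Type*} [Group G] [Field K] [AddCommGroup A] [Module K A]
    [FiniteDimensional K A] (S : Set (G → A)) (hlin : IsLinearSubshift K S)
    (τ : (G → A) → (G → A)) (hτ : IsLCA K τ) :
    IsLinearSubshift K (τ '' S) := by
  obtain ⟨⟨S₀, rfl⟩, hshift, hclosed⟩ := hlin
  obtain ⟨hτlin, M, μ, -, hlocal⟩ := hτ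
  let τL : (G → A) →ₗ[K] (G → A) := IsLinearMap.mk' τ hτlin
  refine ⟨⟨S₀.map τL, Submodule.map_coe τL S₀⟩, ?_, ?_⟩
  · rintro g - ⟨x, hx, rfl⟩
    exact ⟨_, hshift g x hx, shift_comm_of_local_rule hlocal g x⟩
  · let : TopologicalSpace A := ⊥
    have : DiscreteTopology A := ⟨rfl⟩
    exact AffineSubspace.isClosed_image_of_continuous τL.toAffineMap
      (continuous_of_local_rule hlocal) (S := S₀) hclosed
end

section
/- Let G be a group and A an infinite-dimensional vector space over a field K. Suppose G contains an element g of infinite order. Then there exists a linear cellular automaton τ : A^G → A^G whose image τ(A^G) is not closed in the prodiscrete topology on A^G. -/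
/-!
Choose `T : A → A` so that, through a linear surjection `φ : A → K[X]`, `T` acts as
multiplication by `X`, and let `e ∈ A` with `φ e = 1`. The automaton
`τ x h = T (x h) - x (h * g)` does not hit the constant configuration `e`: along the orbit
`gⁿ` a preimage would give polynomials with `q (n + 1) = X * q n - 1` for all `n : ℤ`, whose
degrees would increase by one at each step and so be unbounded below. Yet every impulse
`Pi.single f e` is in the image, since `g` has infinite order and so the forward orbit of `f`
under `g` can absorb the powers `-Tⁿ e`; finite sums of impulses converge to the constant `e`.
-/

open Polynomial Function

theorem Polynomial.natDegree_X_mul_sub_one {R : Type*} [Ring R] [Nontrivial R] {p : R[X]}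
    (hp : p ≠ 0) : (X * p - 1).natDegree = p.natDegree + 1 := by
  rw [natDegree_sub_eq_left_of_natDegree_lt] <;> simp [hp]

theorem Polynomial.X_mul_sub_one_ne_zero {R : Type*} [Ring R] [Nontrivial R] (p : R[X]) :
    X * p - 1 ≠ 0 := fun h => by
  simpa [mul_coeff_zero] using congrArg (coeff · 0) h

theorem Polynomial.exists_ne_X_mul_sub_one {R : Type*} [Ring R] [Nontrivial R] (q : ℤ → R[X]) :
    ∃ n, q (n + 1) ≠ X * q n - 1 := by
  by_contra! hq
  have hq' (n : ℤ) : q n = X * q (n - 1) - 1 := by simpa using hq (n - 1)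
  have hdeg (n : ℤ) : (q n).natDegree = (q (n - 1)).natDegree + 1 := by
    rw [hq' n, natDegree_X_mul_sub_one (hq' (n - 1) ▸ X_mul_sub_one_ne_zero _)]
  have hge (k : ℕ) (n : ℤ) : k ≤ (q n).natDegree := by
    induction k generalizing n with
    | zero => simp
    | succ k ih => rw [hdeg]; exact Nat.succ_le_succ (ih _)
  exact (hge ((q 0).natDegree + 1) 0).not_gt (Nat.lt_succ_self _)

theorem exists_injective_polynomial_linearMap {K A : Type*} [DivisionRing K] [AddCommGroup A]
    [Module K A] (hA : ¬ FiniteDimensional K A) : ∃ ι : K[X] →ₗ[K] A, Injective ι := by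
  let b := Module.Basis.ofVectorSpace K A
  have : Infinite (Module.Basis.ofVectorSpaceIndex K A) :=
    not_finite_iff_infinite.mp fun _ => hA (Module.Finite.of_basis b)
  let u := Infinite.natEmbedding (Module.Basis.ofVectorSpaceIndex K A)
  have hv : Injective (Finsupp.linearCombination K (b ∘ u)) :=
    b.linearIndependent.comp u u.injective
  exact ⟨Finsupp.linearCombination K (b ∘ u) ∘ₗ (basisMonomials K).repr.toLinearMap,
    hv.comp (basisMonomials K).repr.injective⟩

theorem exists_endomorphism_recurrence_unsolvable {K A : Type*} [Field K] [AddCommGroup A]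
    [Module K A] (hA : ¬ FiniteDimensional K A) :
    ∃ (T : A →ₗ[K] A) (e : A), ∀ a : ℤ → A, ∃ n, T (a n) - a (n + 1) ≠ e := by
  obtain ⟨ι, hι⟩ := exists_injective_polynomial_linearMap hA
  obtain ⟨φ, hφ⟩ := ι.exists_leftInverse_of_injective (LinearMap.ker_eq_bot.mpr hι)
  have hφι (p : K[X]) : φ (ι p) = p := LinearMap.congr_fun hφ p
  let T : A →ₗ[K] A := ι ∘ₗ LinearMap.mulLeft K X ∘ₗ φ + (LinearMap.id - ι ∘ₗ φ)
  have hφT (a : A) : φ (T a) = X * φ a := by simp [T, hφι]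
  refine ⟨T, ι 1, fun a => ?_⟩
  obtain ⟨n, hn⟩ := exists_ne_X_mul_sub_one (fun n => φ (a n))
  refine ⟨n, fun h => hn ?_⟩
  have := congrArg φ h
  rw [map_sub, hφT, hφι] at this
  linear_combination -this

theorem mem_closure_of_forall_single_mem {G A : Type*} [DecidableEq G] [AddCommMonoid A]
    [TopologicalSpace A] (S : AddSubmonoid (G → A)) {e : A} (he : ∀ f, Pi.single f e ∈ S) :
    (fun _ => e) ∈ closure (S : Set (G → A)) := by
  refine mem_closure_of_tendsto (f := fun I : Finset G => ∑ f ∈ I, Pi.single f e)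
    (b := Filter.atTop) ?_ (.of_forall fun I => sum_mem fun f _ => he f)
  refine tendsto_pi_nhds.mpr fun h => tendsto_atTop_of_eventually_const (i₀ := {h}) fun I hI => ?_
  simp [Finset.singleton_subset_iff.mp hI]

section ShiftDifference

variable {G K A : Type*} [Group G] [Field K] [AddCommGroup A] [Module K A]

def shiftDifference (T : A →ₗ[K] A) (g : G) : (G → A) →ₗ[K] (G → A) :=
  LinearMap.pi fun h => T ∘ₗ LinearMap.proj (φ := fun _ => A) h - LinearMap.proj (h * g)

@[simp]
theorem shiftDifference_apply (T : A →ₗ[K] A) (g : G) (x : G → A) (h : G) :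
    shiftDifference T g x h = T (x h) - x (h * g) :=
  rfl

theorem isLCA_shiftDifference (T : A →ₗ[K] A) (g : G) : IsLCA K (shiftDifference T g) := by
  classical
  let M : Finset G := {1, g}
  have h1 : (1 : G) ∈ (M : Set G) := by simp [M]
  have hg : g ∈ (M : Set G) := by simp [M]
  let μ : (↥(M : Set G) → A) →ₗ[K] A :=
    T ∘ₗ LinearMap.proj (φ := fun _ => A) ⟨1, h1⟩ - LinearMap.proj ⟨g, hg⟩
  exact ⟨(shiftDifference T g).isLinear, M, μ, μ.isLinear, fun x h => by simp [μ]⟩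

theorem const_notMem_range_shiftDifference {T : A →ₗ[K] A} {e : A}
    (hT : ∀ a : ℤ → A, ∃ n, T (a n) - a (n + 1) ≠ e) (g : G) :
    (fun _ => e) ∉ Set.range (shiftDifference T g) := by
  rintro ⟨x, hx⟩
  obtain ⟨n, hn⟩ := hT fun n => x (g ^ n)
  exact hn (by simpa [zpow_add_one] using congrFun hx (g ^ n))

theorem single_mem_range_shiftDifference [DecidableEq G] (T : A →ₗ[K] A) {g : G}
    (hg : ¬ IsOfFinOrder g) (e : A) (f : G) :
    Pi.single f e ∈ Set.range (shiftDifference T g) := by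
  let orbit : ℕ → G := fun n => f * g ^ (n + 1)
  have horbit : Injective orbit := fun m n h =>
    Nat.succ_injective (injective_pow_iff_not_isOfFinOrder.mpr hg (mul_left_cancel h))
  have horbit_ne (n : ℕ) : orbit n ≠ f := fun h =>
    hg (isOfFinOrder_iff_pow_eq_one.mpr ⟨n + 1, n.succ_pos, by simpa [orbit] using h⟩)
  have horbit_succ (n : ℕ) : orbit n * g = orbit (n + 1) := by simp [orbit, pow_succ, mul_assoc]
  let x : G → A := extend orbit (fun n => -(T ^ n) e) 0
  have hx (n : ℕ) : x (orbit n) = -(T ^ n) e := horbit.extend_apply _ _ n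
  have hx' (h : G) (hh : ∀ n, orbit n ≠ h) : x h = 0 := extend_apply' _ _ h (not_exists.mpr hh)
  refine ⟨x, funext fun h => ?_⟩
  rw [shiftDifference_apply]
  by_cases hh : ∃ n, orbit n = h
  · obtain ⟨n, rfl⟩ := hh
    rw [horbit_succ, hx, hx, Pi.single_eq_of_ne (horbit_ne n), map_neg, pow_succ',
      Module.End.mul_apply, sub_neg_eq_add, neg_add_cancel]
  push Not at hh
  by_cases hf : h = f
  · subst hf
    have hg_orbit : h * g = orbit 0 := by simp [orbit]
    simp [hx' h hh, hg_orbit, hx]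
  · rw [hx' h hh, hx', Pi.single_eq_of_ne hf, map_zero, sub_zero]
    rintro (_ | n) hn
    · exact hf (by simpa [orbit] using hn.symm)
    · exact hh n (mul_right_cancel (by rwa [← horbit_succ] at hn))

end ShiftDifference

theorem stmt14 {G K A : Type*} [Group G] [Field K] [AddCommGroup A] [Module K A]
    (hinf : ¬ FiniteDimensional K A) (g : G) (hg : ¬ IsOfFinOrder g) :
    ∃ τ : (G → A) → (G → A), IsLCA K τ ∧
      ¬ @IsClosed _ (prodiscreteTop G A) (Set.range τ) := by
  classical
  obtain ⟨T, e, hT⟩ := exists_endomorphism_recurrence_unsolvable hinf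
  refine ⟨shiftDifference T g, isLCA_shiftDifference T g, fun hclosed => ?_⟩
  let _ : TopologicalSpace A := ⊥
  have hdense := mem_closure_of_forall_single_mem
    (LinearMap.range (shiftDifference T g)).toAddSubmonoid
    fun f => single_mem_range_shiftDifference T hg e f
  have hclosed : IsClosed (Set.range (shiftDifference T g)) := hclosed
  rw [Submodule.coe_toAddSubmonoid, LinearMap.coe_range, hclosed.closure_eq] at hdense
  exact const_notMem_range_shiftDifference hT g hdense
end

section
/- Let G be a finitely generated group, K a field, A a finite-dimensional K-vector space, Σ ⊆ A^G a linear subshift, and τ : Σ → Σ a linear cellular automaton. Then the limit set Ω(τ) = ⋂_{n≥1} τⁿ(Σ) satisfies τ(Ω(τ)) = Ω(τ). -/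
/-!
For countable `G` and finite-dimensional `A`, the prodiscrete space `G → A` is linearly compact:
a decreasing sequence of nonempty closed affine subspaces has nonempty intersection. On a finite
window `F ⊆ G` the restrictions of the subspaces form a decreasing chain of affine subspaces of
the finite-dimensional space `F → A`, which stabilises; this Mittag-Leffler condition lets one
build a point of the intersection window by window along an exhaustion of `G`.

Hence a continuous linear map sends closed subspaces to closed subspaces, so all `τⁿ(Σ)` are
closed subspaces. For `x ∈ Ω(τ)` the sets `τ⁻¹(x) ∩ τⁿ(Σ)` then form such a chain, and a point of
their intersection is a preimage of `x` lying in `Ω(τ)`.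
-/

open Filter Set Topology

section AffineSubspace

variable {K V W : Type*} [DivisionRing K] [AddCommGroup V] [Module K V] [AddCommGroup W]
  [Module K W]

theorem AffineSubspace.mem_mk'_ker_iff {f : V →ₗ[K] W} {x y : V} :
    y ∈ AffineSubspace.mk' x (LinearMap.ker f) ↔ f y = f x := by
  simp [AffineSubspace.mem_mk', sub_eq_zero]

theorem AffineSubspace.exists_forall_ge_eq_of_antitone [FiniteDimensional K V]
    {s : ℕ → AffineSubspace K V} (hs : Antitone s) (hne : ∀ n, (s n : Set V).Nonempty) :
    ∃ N, ∀ m ≥ N, s m = s N := by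
  obtain ⟨N, hN⟩ := IsArtinian.monotone_stabilizes
    ⟨fun n => OrderDual.toDual (s n).direction, fun _ _ h => direction_le (hs h)⟩
  exact ⟨N, fun m hm => eq_of_direction_eq_of_nonempty_of_le (hN m hm).symm (hne m) (hs hm)⟩

end AffineSubspace

section Prodiscrete

variable {G A : Type*}

theorem LinearMap.funLeft_val_eq_iff_eqOn (K : Type*) [Semiring K] [AddCommMonoid A] [Module K A]
    (s : Set G) {u v : G → A} :
    funLeft K A ((↑) : s → G) u = funLeft K A (↑) v ↔ EqOn u v s := by
  simp [funext_iff, EqOn]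

theorem exists_forall_eqOn_of_eqOn_succ {F : ℕ → Finset G} (hFm : Monotone F)
    (hF : Tendsto F atTop atTop) {u : ℕ → G → A} (hu : ∀ k, EqOn (u (k + 1)) (u k) (F k)) :
    ∃ y, ∀ k, EqOn (u k) y (F k) := by
  have hcompat : ∀ k m, k ≤ m → EqOn (u m) (u k) (F k) := by
    intro k m hkm
    induction m, hkm using Nat.le_induction with
    | base => exact eqOn_refl _ _
    | succ m hkm ih => exact ((hu m).mono (hFm hkm)).trans ih
  choose idx hidx using fun g => (tendsto_atTop.1 hF {g}).exists
  refine ⟨fun g => u (idx g) g, fun k g hg => ?_⟩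
  exact (hcompat k _ (le_max_left k (idx g)) hg).symm.trans
    (hcompat (idx g) _ (le_max_right k _) (hidx g (Finset.mem_singleton_self g)))

variable [TopologicalSpace A] [DiscreteTopology A]

theorem isClopen_setOf_eqOn (F : Finset G) (y : G → A) : IsClopen {u : G → A | EqOn u y F} := by
  have hpi : {u : G → A | EqOn u y F} = (F : Set G).pi fun g => {y g} := by
    ext u
    simp [EqOn]
  rw [hpi]
  exact ⟨isClosed_set_pi fun _ _ => isClosed_discrete _,
    isOpen_set_pi F.finite_toSet fun _ _ => isOpen_discrete _⟩

theorem exists_eqOn_of_mem_closure {s : Set (G → A)} {y : G → A} (hy : y ∈ closure s)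
    (F : Finset G) : ∃ c ∈ s, EqOn c y F := by
  obtain ⟨c, hcF, hcs⟩ := mem_closure_iff.1 hy _ (isClopen_setOf_eqOn F y).isOpen (eqOn_refl y _)
  exact ⟨c, hcs, hcF⟩

theorem tendsto_nhds_of_eqOn {ι : Type*} {l : Filter ι} {F : ι → Finset G}
    (hF : Tendsto F l atTop) {c : ι → G → A} {y : G → A} (h : ∀ i, EqOn (c i) y (F i)) :
    Tendsto c l (𝓝 y) := by
  refine tendsto_pi_nhds.2 fun g => ?_
  rw [nhds_discrete, tendsto_pure]
  filter_upwards [tendsto_atTop.1 hF {g}] with i hi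
  exact h i (hi (Finset.mem_singleton_self g))

theorem continuous_of_localRule [Group G] {M : Finset G} {μ : (M → A) → A}
    {τ : (G → A) → G → A} (h : ∀ x g, τ x g = μ fun m : (M : Set G) => x (g * m)) :
    Continuous τ := by
  refine continuous_pi fun g => ?_
  simp_rw [h]
  exact continuous_of_discreteTopology.comp (continuous_pi fun m => continuous_apply _)

end Prodiscrete

section LinearCompactness

variable {G A : Type*}

def AgreesWithAll (C : ℕ → Set (G → A)) (F : Set G) (z : G → A) : Prop :=
  ∀ n, ∃ c ∈ C n, EqOn c z F

theorem exists_forall_mem_agreesWithAll {K : Type*} [DivisionRing K] [AddCommGroup A] [Module K A]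
    [FiniteDimensional K A] {C : ℕ → AffineSubspace K (G → A)} (hC : Antitone C)
    (hne : ∀ n, (C n : Set (G → A)).Nonempty) (F : Finset G) :
    ∃ N, ∀ m ≥ N, ∀ z ∈ C m, AgreesWithAll (fun n => (C n : Set (G → A))) F z := by
  let π := LinearMap.funLeft K A ((↑) : ↥(F : Set G) → G)
  obtain ⟨N, hN⟩ := AffineSubspace.exists_forall_ge_eq_of_antitone
    (s := fun n => (C n).map π.toAffineMap) (fun _ _ h => AffineSubspace.map_mono _ (hC h))
    fun n => (hne n).image _
  refine ⟨N, fun m hm z hz n => ?_⟩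
  rcases le_total n m with hnm | hmn
  · exact ⟨z, hC hnm hz, eqOn_refl _ _⟩
  · have hπz : π z ∈ (C n).map π.toAffineMap := by
      rw [hN n (hm.trans hmn), ← hN m hm]
      exact ⟨z, hz, rfl⟩
    obtain ⟨c, hc, hcz⟩ := AffineSubspace.mem_map.1 hπz
    exact ⟨c, hc, (LinearMap.funLeft_val_eq_iff_eqOn K _).1 hcz⟩

variable [TopologicalSpace A] [DiscreteTopology A] [Countable G]

theorem nonempty_iInter_of_agreesWithAll {C : ℕ → Set (G → A)} (hcl : ∀ n, IsClosed (C n))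
    (h₀ : ∀ F : Finset G, ∃ z, AgreesWithAll C F z)
    (hext : ∀ (F F' : Finset G) z, AgreesWithAll C F z →
      ∃ z', AgreesWithAll C F' z' ∧ EqOn z' z F) :
    (⋂ n, C n).Nonempty := by
  obtain ⟨F, hFm, hF⟩ := exists_seq_monotone_tendsto_atTop_atTop (Finset G)
  obtain ⟨z₀, hz₀⟩ := h₀ (F 0)
  choose next hnext heq using
    fun k (z : {z // AgreesWithAll C (F k) z}) => hext (F k) (F (k + 1)) z z.2
  let u : (k : ℕ) → {z // AgreesWithAll C (F k) z} :=
    fun k => Nat.rec ⟨z₀, hz₀⟩ (fun k z => ⟨next k z, hnext k z⟩) k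
  obtain ⟨y, hy⟩ := exists_forall_eqOn_of_eqOn_succ hFm hF (u := fun k => (u k).1)
    fun k => heq k (u k)
  refine ⟨y, mem_iInter.2 fun n => ?_⟩
  choose c hcC hcu using fun k => (u k).2 n
  exact (hcl n).mem_of_tendsto (tendsto_nhds_of_eqOn hF fun k => (hcu k).trans (hy k))
    (Eventually.of_forall hcC)

variable {K : Type*} [DivisionRing K] [AddCommGroup A] [Module K A] [FiniteDimensional K A]

theorem AffineSubspace.nonempty_iInter_of_isClosed {C : ℕ → AffineSubspace K (G → A)}
    (hC : Antitone C) (hne : ∀ n, (C n : Set (G → A)).Nonempty)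
    (hcl : ∀ n, IsClosed (C n : Set (G → A))) : (⋂ n, (C n : Set (G → A))).Nonempty := by
  choose N hN using exists_forall_mem_agreesWithAll hC hne
  refine nonempty_iInter_of_agreesWithAll hcl (fun F => ?_) fun F F' z hz => ?_
  · obtain ⟨z, hz⟩ := hne (N F)
    exact ⟨z, hN F _ le_rfl z hz⟩
  · obtain ⟨c, hc, hcz⟩ := hz (N F')
    exact ⟨c, hN F' _ le_rfl c hc, hcz⟩

end LinearCompactness

def limitSet {X : Type*} (f : X → X) (s : Set X) : Set X :=
  ⋂ (n : ℕ) (_ : 1 ≤ n), f^[n] '' s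

theorem antitone_image_iterate {X : Type*} {f : X → X} {s : Set X} (hf : MapsTo f s s) :
    Antitone fun n => f^[n] '' s :=
  antitone_nat_of_succ_le fun n => by
    rw [Function.iterate_succ, image_comp]
    exact image_mono hf.image_subset

theorem limitSet_eq_iInter {X : Type*} {f : X → X} {s : Set X} (hf : MapsTo f s s) :
    limitSet f s = ⋂ n, f^[n] '' s :=
  (iInter_ge_eq_iInter_nat_add _ 1).trans ((antitone_image_iterate hf).iInter_nat_add 1)

section LinearMap

variable {G A K : Type*} [TopologicalSpace A] [DiscreteTopology A] [Countable G] [DivisionRing K]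
  [AddCommGroup A] [Module K A] [FiniteDimensional K A] {τ : (G → A) →ₗ[K] (G → A)}

theorem isClosed_image_submodule (hτ : Continuous τ) {p : Submodule K (G → A)}
    (hp : IsClosed (p : Set (G → A))) : IsClosed (τ '' p) := by
  refine closure_subset_iff_isClosed.1 fun y hy => ?_
  obtain ⟨F, hFm, hF⟩ := exists_seq_monotone_tendsto_atTop_atTop (Finset G)
  have hw : ∀ k, ∃ w ∈ p, EqOn (τ w) y (F k) := fun k => by
    obtain ⟨_, ⟨w, hw, rfl⟩, hwy⟩ := exists_eqOn_of_mem_closure hy (F k)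
    exact ⟨w, hw, hwy⟩
  choose w hwp hwy using hw
  let C k : AffineSubspace K (G → A) := (p : AffineSubspace K (G → A)) ⊓
    AffineSubspace.mk' (w k)
      (LinearMap.ker (LinearMap.funLeft K A ((↑) : ↥(F k : Set G) → G) ∘ₗ τ))
  have hC : ∀ k, (C k : Set (G → A)) = (p : Set (G → A)) ∩ τ ⁻¹' {v | EqOn v y (F k)} := by
    intro k
    ext v
    simp only [C, SetLike.mem_coe, AffineSubspace.mem_inf_iff, Submodule.mem_toAffineSubspace,
      AffineSubspace.mem_mk'_ker_iff, LinearMap.comp_apply, LinearMap.funLeft_val_eq_iff_eqOn,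
      mem_inter_iff, mem_preimage]
    exact and_congr_right' ⟨fun h => h.trans (hwy k), fun h => h.trans (hwy k).symm⟩
  obtain ⟨z, hz⟩ := AffineSubspace.nonempty_iInter_of_isClosed (C := C)
    (fun k l hkl => by
      rw [← SetLike.coe_subset_coe, hC, hC]
      exact inter_subset_inter_right _ fun v hv => hv.mono (hFm hkl))
    (fun k => ⟨w k, by rw [hC]; exact ⟨hwp k, hwy k⟩⟩)
    fun k => by rw [hC]; exact hp.inter ((isClopen_setOf_eqOn _ _).isClosed.preimage hτ)
  simp only [mem_iInter, hC] at hz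
  refine ⟨z, (hz 0).1, funext fun g => ?_⟩
  obtain ⟨k, hk⟩ := (tendsto_atTop.1 hF {g}).exists
  exact (hz k).2 (hk (Finset.mem_singleton_self g))

theorem isClosed_image_iterate (hτ : Continuous τ) {p : Submodule K (G → A)}
    (hp : IsClosed (p : Set (G → A))) (n : ℕ) : IsClosed (τ^[n] '' p) := by
  induction n with
  | zero => simpa using hp
  | succ n ih =>
    rw [Function.iterate_succ', image_comp, ← Module.End.coe_pow, ← Submodule.map_coe]
    rw [← Module.End.coe_pow, ← Submodule.map_coe] at ih
    exact isClosed_image_submodule hτ ih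

theorem image_limitSet (hτ : Continuous τ) {p : Submodule K (G → A)}
    (hp : IsClosed (p : Set (G → A))) (hmap : MapsTo τ p p) :
    τ '' limitSet τ p = limitSet τ p := by
  rw [limitSet_eq_iInter hmap]
  refine (subset_iInter fun n => ?_).antisymm fun x hx => ?_
  · refine (image_mono (iInter_subset _ n)).trans ?_
    rw [← image_comp, ← Function.iterate_succ']
    exact antitone_image_iterate hmap n.le_succ
  rw [mem_iInter] at hx
  have hpre : ∀ n, ∃ w ∈ τ^[n] '' p, τ w = x := fun n => by
    simpa only [Function.iterate_succ', image_comp, mem_image] using hx (n + 1)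
  obtain ⟨w₀, -, hw₀⟩ := hpre 0
  let C n : AffineSubspace K (G → A) :=
    (p.map (τ ^ n) : AffineSubspace K (G → A)) ⊓ AffineSubspace.mk' w₀ (LinearMap.ker τ)
  have hC : ∀ n, (C n : Set (G → A)) = τ^[n] '' p ∩ τ ⁻¹' {x} := by
    intro n
    ext v
    simp only [C, SetLike.mem_coe, AffineSubspace.mem_inf_iff, Submodule.mem_toAffineSubspace,
      AffineSubspace.mem_mk'_ker_iff, hw₀, Submodule.mem_map, Module.End.coe_pow, mem_inter_iff,
      mem_image, mem_preimage, mem_singleton_iff]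
  obtain ⟨z, hz⟩ := AffineSubspace.nonempty_iInter_of_isClosed (C := C)
    (fun m n hmn => by
      rw [← SetLike.coe_subset_coe, hC, hC]
      exact inter_subset_inter_left _ (antitone_image_iterate hmap hmn))
    (fun n => by rw [hC]; exact hpre n)
    fun n => by
      rw [hC]
      exact (isClosed_image_iterate hτ hp n).inter (isClosed_singleton.preimage hτ)
  simp only [mem_iInter, hC] at hz
  exact ⟨z, mem_iInter.2 fun n => (hz n).1, (hz 0).2⟩

end LinearMap

theorem Group.FG.countable {G : Type*} [Group G] (hfg : Group.FG G) : Countable G := by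
  obtain ⟨α, _, φ, hφ⟩ := Group.fg_iff_exists_freeGroup_hom_surjective_finite.1 hfg
  exact hφ.countable

theorem stmt15 {G K A : Type*} [Group G] [Field K] [AddCommGroup A] [Module K A]
    [FiniteDimensional K A] (hfg : Group.FG G)
    (S : Set (G → A)) (hlin : IsLinearSubshift K S)
    (τ : (G → A) → (G → A)) (hτ : IsLCA K τ) (hmap : Set.MapsTo τ S S) :
    τ '' (⋂ (n : ℕ) (_ : 1 ≤ n), τ^[n] '' S) =
      ⋂ (n : ℕ) (_ : 1 ≤ n), τ^[n] '' S := by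
  obtain ⟨⟨p, rfl⟩, -, hp⟩ := hlin
  obtain ⟨hτlin, M, μ, -, hloc⟩ := hτ
  let _ : TopologicalSpace A := ⊥
  have : DiscreteTopology A := ⟨rfl⟩
  have := hfg.countable
  exact image_limitSet (τ := IsLinearMap.mk' τ hτlin) (continuous_of_localRule hloc) hp hmap
end

section
/- Let G be a group, K a field, A a finite-dimensional K-vector space, Σ ⊆ A^G a linear subshift of finite type, and τ : Σ → Σ a linear cellular automaton. Then τ is nilpotent (τ^{n_0} = 0 for some n_0 ≥ 1) if and only if Ω(τ) := ⋂_{n≥1} τⁿ(Σ) = {0}. -/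
/-
Give `A` the discrete topology. As `A` is finite-dimensional, `G → A` is the algebraic dual of
`G →₀ Dual K A`, and a closed subspace is the annihilator of the functionals vanishing on it.
Hence a directed family of nonempty closed affine subspaces of `G → A` has a common point: the
values it prescribes on these functionals glue along the directed union and extend to all of
`G →₀ Dual K A`. Two consequences: a linear cellular automaton maps closed subspaces to closed
subspaces, and for a decreasing sequence of closed subspaces `Vₙ`, the subspaces
`{y 1 | y ∈ Vₙ}` of `A` stabilise at `{z 1 | z ∈ ⋂ Vₙ}`. Applied to `Vₙ = τⁿ(Σ)` with
`Ω(τ) = 0`, every configuration of some `τᴺ(Σ)` vanishes at `1`, hence everywhere by shift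
invariance.
-/

open Module

section Iterates
variable {R M : Type*} [Semiring R] [AddCommMonoid M] [Module R M]

theorem Submodule.antitone_map_pow {T : Module.End R M} {V : Submodule R M} (hV : V.map T ≤ V) :
    Antitone fun n => V.map (T ^ n) :=
  antitone_nat_of_succ_le fun n => by
    rw [pow_succ, Module.End.mul_eq_comp, Submodule.map_comp]
    exact Submodule.map_mono hV

theorem Submodule.iInter_iterate_image_eq_iInf {T : Module.End R M} {V : Submodule R M}
    (hV : V.map T ≤ V) :
    (⋂ (n : ℕ) (_ : 1 ≤ n), T^[n] '' V) = ((⨅ n, V.map (T ^ n) : Submodule R M) : Set M) := by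
  ext z
  simp only [Set.mem_iInter, SetLike.mem_coe, Submodule.mem_iInf, ← Module.End.coe_pow,
    ← Submodule.map_coe]
  exact ⟨fun h n => Submodule.antitone_map_pow hV n.le_succ (h (n + 1) n.succ_pos),
    fun h n _ => h n⟩

end Iterates

section Prodiscrete
variable {G A : Type*} [TopologicalSpace A] [DiscreteTopology A]

theorem mem_closure_pi_iff_forall_finset {S : Set (G → A)} {x : G → A} :
    x ∈ closure S ↔ ∀ E : Finset G, ∃ s ∈ S, ∀ g ∈ E, s g = x g := by
  refine ⟨fun hx E => ?_, fun h => mem_closure_iff.2 fun o ho hxo => ?_⟩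
  · have hopen : IsOpen ((E : Set G).pi fun g => {x g}) :=
      isOpen_set_pi E.finite_toSet fun _ _ => isOpen_discrete _
    obtain ⟨s, hs, hsS⟩ := mem_closure_iff.1 hx _ hopen (by simp)
    exact ⟨s, hsS, fun g hg => hs g hg⟩
  · obtain ⟨E, u, hu, hEu⟩ := isOpen_pi_iff.1 ho x hxo
    obtain ⟨s, hsS, hs⟩ := h E
    exact ⟨s, hEu fun g hg => hs g hg ▸ (hu g hg).2, hsS⟩

end Prodiscrete

section AffineKernel
variable {K M N : Type*} [Ring K] [AddCommGroup M] [Module K M] [AddCommGroup N] [Module K N]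

theorem mem_mk'_inf_ker_iff {W : Submodule K M} {φ : M →ₗ[K] N} {p : M} (hp : p ∈ W) (z : M) :
    z ∈ AffineSubspace.mk' p (W ⊓ LinearMap.ker φ) ↔ z ∈ W ∧ φ z = φ p := by
  rw [AffineSubspace.mem_mk', vsub_eq_sub, Submodule.mem_inf, LinearMap.mem_ker, map_sub,
    sub_eq_zero, Submodule.sub_mem_iff_left _ hp]

theorem isClosed_inf_ker [TopologicalSpace M] [TopologicalSpace N] [T1Space N]
    {W : Submodule K M} (hW : IsClosed (W : Set M)) {φ : M →ₗ[K] N} (hφ : Continuous φ) :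
    IsClosed ((W ⊓ LinearMap.ker φ : Submodule K M) : Set M) :=
  hW.inter (isClosed_singleton.preimage hφ)

end AffineKernel

section LinearCompactness
variable {K G A : Type*} [Field K] [AddCommGroup A] [Module K A] [FiniteDimensional K A]

variable (K G A) in
noncomputable def piEquivDualFinsupp : (G → A) ≃ₗ[K] Dual K (G →₀ Dual K A) :=
  (LinearEquiv.piCongrRight fun _ => evalEquiv K A).trans (Finsupp.lsum K)

@[simp]
theorem piEquivDualFinsupp_single (x : G → A) (g : G) (α : Dual K A) :
    piEquivDualFinsupp K G A x (Finsupp.single g α) = α (x g) := by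
  rw [piEquivDualFinsupp, LinearEquiv.trans_apply, Finsupp.lsum_single]
  simp

variable [TopologicalSpace A] [DiscreteTopology A]

theorem exists_finsupp_separating_of_notMem {V : Submodule K (G → A)}
    (hV : IsClosed (V : Set (G → A))) {x : G → A} (hx : x ∉ V) :
    ∃ f : G →₀ Dual K A, (∀ v ∈ V, piEquivDualFinsupp K G A v f = 0) ∧
      piEquivDualFinsupp K G A x f ≠ 0 := by
  classical
  obtain ⟨E, hE⟩ : ∃ E : Finset G, ∀ v ∈ V, ¬ ∀ g ∈ E, v g = x g := by
    simpa [hV.closure_eq, hx] using (mem_closure_pi_iff_forall_finset (S := (V : Set (G → A)))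
      (x := x)).not
  set r : (G → A) →ₗ[K] (E → A) := LinearMap.funLeft K A Subtype.val
  have hrx : r x ∉ V.map r := by
    rintro ⟨v, hv, hvx⟩
    exact hE v hv fun g hg => congr_fun hvx ⟨g, hg⟩
  obtain ⟨χ, hχx, hχV⟩ := Submodule.exists_dual_map_eq_bot_of_notMem hrx inferInstance
  set f : G →₀ Dual K A := ∑ g : E, Finsupp.single g.1 (χ ∘ₗ LinearMap.single K (fun _ => A) g)
  have hf : ∀ y, piEquivDualFinsupp K G A y f = χ (r y) := fun y => by
    simp only [f, map_sum, piEquivDualFinsupp_single, LinearMap.comp_apply, LinearMap.coe_single]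
    rw [← map_sum, Finset.univ_sum_single]
    rfl
  refine ⟨f, fun v hv => ?_, by rwa [hf]⟩
  rw [hf, ← Submodule.mem_bot K, ← hχV]
  exact ⟨r v, ⟨v, hv, rfl⟩, rfl⟩

theorem nonempty_iInter_affineSubspace_of_directed {ι : Type*}
    (C : ι → AffineSubspace K (G → A)) (hne : ∀ i, (C i : Set (G → A)).Nonempty)
    (hcl : ∀ i, IsClosed ((C i).direction : Set (G → A))) (hdir : Directed (· ≥ ·) C) :
    (⋂ i, (C i : Set (G → A))).Nonempty := by
  choose p hp using hne
  set e := piEquivDualFinsupp K G A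
  set L : ι → Submodule K (G →₀ Dual K A) := fun i =>
    ((C i).direction.map e.toLinearMap).dualCoannihilator
  have hL : ∀ i f, f ∈ L i ↔ ∀ v ∈ (C i).direction, e v f = 0 := fun i f => by
    rw [Submodule.mem_dualCoannihilator]
    exact ⟨fun h v hv => h _ (Submodule.mem_map_of_mem hv),
      by rintro h _ ⟨v, hv, rfl⟩; exact h v hv⟩
  set P : ι → (G →₀ Dual K A) →ₗ.[K] K := fun i => ⟨L i, (e (p i)).domRestrict (L i)⟩
  have hP : DirectedOn (· ≤ ·) (Set.range P) := by
    have hmono : ∀ i k, C k ≤ C i → P i ≤ P k := fun i k hki => by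
      have hdir_le := AffineSubspace.direction_le hki
      refine ⟨fun f hf => (hL k f).2 fun v hv => (hL i f).1 hf v (hdir_le hv),
        fun f f' hff' => ?_⟩
      have hpki : p k - p i ∈ (C i).direction :=
        AffineSubspace.vsub_mem_direction (hki (hp k)) (hp i)
      have h0 := (hL i f).1 f.2 _ hpki
      rw [map_sub, LinearMap.sub_apply, sub_eq_zero] at h0
      change e (p i) f = e (p k) f'
      rw [← hff', h0]
    refine directedOn_range.2 fun i j => ?_
    obtain ⟨k, hik, hjk⟩ := hdir i j
    exact ⟨k, hmono i k hik, hmono j k hjk⟩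
  obtain ⟨ψ, hψ⟩ :=
    LinearMap.exists_extend (K := K) (V := G →₀ Dual K A) (V' := K) (LinearPMap.sSup _ hP).toFun
  refine ⟨e.symm ψ, Set.mem_iInter.2 fun i => ?_⟩
  rw [SetLike.mem_coe, ← AffineSubspace.vsub_right_mem_direction_iff_mem (hp i), vsub_eq_sub]
  by_contra hx
  obtain ⟨f, hfL, hfx⟩ := exists_finsupp_separating_of_notMem (hcl i) hx
  have hψf : ψ f = e (p i) f := by
    have hfL' : f ∈ L i := (hL i f).2 hfL
    calc ψ f = LinearPMap.sSup _ hP ⟨f, (LinearPMap.le_sSup hP (Set.mem_range_self i)).1 hfL'⟩ :=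
          LinearMap.congr_fun hψ ⟨f, _⟩
      _ = P i ⟨f, hfL'⟩ := LinearPMap.sSup_apply hP (Set.mem_range_self i) ⟨f, hfL'⟩
      _ = e (p i) f := rfl
  exact hfx (by rw [map_sub, LinearMap.sub_apply, LinearEquiv.apply_symm_apply, hψf, sub_self])

theorem isClosed_map_of_continuous {H B : Type*} [AddCommGroup B] [Module K B]
    [TopologicalSpace B] [DiscreteTopology B] (f : (G → A) →ₗ[K] (H → B)) (hf : Continuous f)
    {V : Submodule K (G → A)} (hV : IsClosed (V : Set (G → A))) :
    IsClosed (V.map f : Set (H → B)) := by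
  classical
  refine isClosed_of_closure_subset fun x hx => ?_
  rw [mem_closure_pi_iff_forall_finset] at hx
  choose p hpV hpx using fun E => by simpa using hx E
  set r : ∀ E : Finset H, (H → B) →ₗ[K] (E → B) := fun E => LinearMap.funLeft K B Subtype.val
  set C : Finset H → AffineSubspace K (G → A) :=
    fun E => AffineSubspace.mk' (p E) (V ⊓ LinearMap.ker (r E ∘ₗ f))
  have hC : ∀ E y, y ∈ C E ↔ y ∈ V ∧ ∀ h ∈ E, f y h = x h := fun E y => by
    rw [mem_mk'_inf_ker_iff (hpV E), LinearMap.comp_apply, LinearMap.comp_apply, funext_iff]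
    simp [r, LinearMap.funLeft_apply, hpx]
  have hCcl : ∀ E, IsClosed ((C E).direction : Set (G → A)) := fun E => by
    rw [AffineSubspace.direction_mk']
    exact isClosed_inf_ker hV ((continuous_pi fun _ => continuous_apply _).comp hf)
  have hCanti : ∀ E F, E ⊆ F → C F ≤ C E := fun E F hEF y hy => by
    rw [hC] at hy ⊢
    exact ⟨hy.1, fun h hh => hy.2 h (hEF hh)⟩
  have hCdir : Directed (· ≥ ·) C := fun E F => ⟨E ∪ F,
    hCanti _ _ Finset.subset_union_left, hCanti _ _ Finset.subset_union_right⟩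
  obtain ⟨y, hy⟩ := nonempty_iInter_affineSubspace_of_directed C
    (fun E => ⟨p E, AffineSubspace.self_mem_mk' _ _⟩) hCcl hCdir
  have hyC : ∀ E, y ∈ C E := Set.mem_iInter.1 hy
  exact ⟨y, ((hC ∅ y).1 (hyC ∅)).1,
    funext fun h => ((hC {h} y).1 (hyC {h})).2 h (Finset.mem_singleton_self h)⟩

theorem exists_map_proj_eq_map_proj_iInf (V : ℕ → Submodule K (G → A)) (hV : Antitone V)
    (hcl : ∀ n, IsClosed (V n : Set (G → A))) (g : G) :
    ∃ N, (V N).map (LinearMap.proj g) = (⨅ n, V n).map (LinearMap.proj g) := by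
  set W : ℕ → Submodule K A := fun n => (V n).map (LinearMap.proj g)
  obtain ⟨N, hN⟩ := IsArtinian.monotone_stabilizes
    ⟨fun n => OrderDual.toDual (W n), fun m n hmn => Submodule.map_mono (hV hmn)⟩
  have hWN : ∀ n, W N ≤ W n := fun n => (le_total n N).elim
    (fun h => Submodule.map_mono (hV h)) (fun h => (hN n h).ge)
  refine ⟨N, le_antisymm (fun a ha => ?_) (Submodule.map_mono (iInf_le V N))⟩
  choose y hyV hya using fun n => Submodule.mem_map.1 (hWN n ha)
  set C : ℕ → AffineSubspace K (G → A) :=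
    fun n => AffineSubspace.mk' (y n) (V n ⊓ LinearMap.ker (LinearMap.proj g))
  have hC : ∀ n z, z ∈ C n ↔ z ∈ V n ∧ z g = a := fun n z => by
    rw [mem_mk'_inf_ker_iff (hyV n)]
    simp [hya]
  have hCcl : ∀ n, IsClosed ((C n).direction : Set (G → A)) := fun n => by
    rw [AffineSubspace.direction_mk']
    exact isClosed_inf_ker (hcl n) (continuous_apply g)
  have hCanti : Antitone C := fun m n hmn z hz => by
    rw [hC] at hz ⊢
    exact ⟨hV hmn hz.1, hz.2⟩
  obtain ⟨z, hz⟩ := nonempty_iInter_affineSubspace_of_directed C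
    (fun n => ⟨y n, AffineSubspace.self_mem_mk' _ _⟩) hCcl hCanti.directed_ge
  have hzC : ∀ n, z ∈ C n := Set.mem_iInter.1 hz
  exact ⟨z, Submodule.mem_iInf _ |>.2 fun n => ((hC n z).1 (hzC n)).1, ((hC 0 z).1 (hzC 0)).2⟩

theorem isClosed_map_pow {T : Module.End K (G → A)} (hT : Continuous T)
    {V : Submodule K (G → A)} (hV : IsClosed (V : Set (G → A))) (n : ℕ) :
    IsClosed (V.map (T ^ n) : Set (G → A)) := by
  induction n with
  | zero => simpa [Module.End.one_eq_id] using hV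
  | succ n ih =>
    rw [pow_succ', Module.End.mul_eq_comp, Submodule.map_comp]
    exact isClosed_map_of_continuous T hT ih

end LinearCompactness

section CellularAutomaton
variable {G K A : Type*} [Group G] [Field K] [AddCommGroup A] [Module K A]

theorem IsLCA.continuous [TopologicalSpace A] [DiscreteTopology A] {τ : (G → A) → G → A}
    (hτ : IsLCA K τ) : Continuous τ := by
  obtain ⟨-, M, μ, -, hloc⟩ := hτ
  rw [show τ = fun x g => μ fun m => x (g * m) from funext fun x => funext (hloc x)]
  exact continuous_pi fun g =>
    continuous_of_discreteTopology.comp (continuous_pi fun m => continuous_apply _)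

theorem IsLCA.commute_shift {τ : (G → A) → G → A} (hτ : IsLCA K τ) (g : G) :
    Function.Commute τ (fun x h => x (g * h)) := fun x => by
  obtain ⟨-, M, μ, -, hloc⟩ := hτ
  funext h
  simp only [hloc, mul_assoc]

theorem IsLCA.iterate_eq_zero_of_forall_apply_one {τ : (G → A) → G → A} (hτ : IsLCA K τ)
    {S : Set (G → A)} (hS : ∀ g : G, ∀ x ∈ S, (fun h => x (g⁻¹ * h)) ∈ S) (n : ℕ)
    (h : ∀ x ∈ S, τ^[n] x 1 = 0) (x : G → A) (hx : x ∈ S) : τ^[n] x = 0 := by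
  funext g
  have h1 := h _ (by simpa using hS g⁻¹ x hx)
  rw [(hτ.commute_shift g).iterate_left n x] at h1
  simpa using h1

end CellularAutomaton

theorem stmt17_general {G K A : Type*} [Group G] [Field K] [AddCommGroup A] [Module K A]
    [FiniteDimensional K A] (S : Set (G → A)) (hlin : IsLinearSubshift K S)
    (τ : (G → A) → (G → A)) (hτ : IsLCA K τ) (hmap : Set.MapsTo τ S S) :
    (∃ n : ℕ, 1 ≤ n ∧ ∀ x ∈ S, τ^[n] x = 0) ↔
      (⋂ (n : ℕ) (_ : 1 ≤ n), τ^[n] '' S) = {0} := by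
  let : TopologicalSpace A := ⊥
  have : DiscreteTopology A := ⟨rfl⟩
  obtain ⟨⟨S₀, rfl⟩, hshift, hclosed⟩ := hlin
  obtain ⟨T, rfl⟩ : ∃ T : Module.End K (G → A), ⇑T = τ := ⟨IsLinearMap.mk' τ hτ.1, rfl⟩
  have hS₀ : S₀.map T ≤ S₀ := Submodule.map_le_iff_le_comap.2 hmap
  set V : ℕ → Submodule K (G → A) := fun n => S₀.map (T ^ n)
  rw [Submodule.iInter_iterate_image_eq_iInf hS₀, ← Submodule.bot_coe (R := K),
    SetLike.coe_set_eq]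
  constructor
  · rintro ⟨n, -, hnil⟩
    refine eq_bot_iff.2 fun z hz => ?_
    obtain ⟨x, hx, rfl⟩ := (Submodule.mem_iInf V).1 hz n
    exact (Submodule.mem_bot K).2 (by simpa [Module.End.coe_pow] using hnil x hx)
  · intro hbot
    obtain ⟨N, hN⟩ := exists_map_proj_eq_map_proj_iInf V (Submodule.antitone_map_pow hS₀)
      (isClosed_map_pow hτ.continuous hclosed) 1
    rw [hbot, Submodule.map_bot] at hN
    refine ⟨N + 1, N.succ_pos, hτ.iterate_eq_zero_of_forall_apply_one hshift _ fun x hx => ?_⟩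
    have hx' : T^[N + 1] x ∈ V N :=
      Submodule.antitone_map_pow hS₀ N.le_succ ⟨x, hx, by rw [Module.End.coe_pow]⟩
    have h1 := Submodule.mem_map_of_mem (f := (LinearMap.proj 1 : (G → A) →ₗ[K] A)) hx'
    rwa [hN, Submodule.mem_bot] at h1

theorem stmt17 {G K A : Type*} [Group G] [Field K] [AddCommGroup A] [Module K A]
    [FiniteDimensional K A] (S : Set (G → A)) (hlin : IsLinearSubshift K S)
    (hSFT : IsSFT S)
    (τ : (G → A) → (G → A)) (hτ : IsLCA K τ) (hmap : Set.MapsTo τ S S) :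
    (∃ n : ℕ, 1 ≤ n ∧ ∀ x ∈ S, τ^[n] x = 0) ↔
      (⋂ (n : ℕ) (_ : 1 ≤ n), τ^[n] '' S) = {0} :=
  stmt17_general S hlin τ hτ hmap
end

section
/- Let G be a group, K a field, A an infinite-dimensional K-vector space with a countable linearly independent family (e_n)_{n∈ℕ}. Let f : A → A be a K-linear map with f(e_n) = e_{n+1} for all n and f vanishing on a complement of span{e_n}. Let τ_f : A^G → A^G be the product map (τ_f(x))(g) = f(x(g)). Then ⋂_{n≥1} τ_fⁿ(A^G) = {0}, yet τ_f is not pointwise nilpotent (there exists x ∈ A^G such that τ_fⁿ(x) ≠ 0 for all n ≥ 1). -/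
theorem stmt19 {G K A : Type*} [Group G] [Field K] [AddCommGroup A] [Module K A]
    (e : ℕ → A) (he : LinearIndependent K e) (f : A →ₗ[K] A)
    (hfe : ∀ n : ℕ, f (e n) = e (n + 1))
    (C : Submodule K A) (hC : IsCompl (Submodule.span K (Set.range e)) C)
    (hfC : ∀ a ∈ C, f a = 0) :
    (⋂ (n : ℕ) (_ : 1 ≤ n),
        (fun (x : G → A) (g : G) => f (x g))^[n] '' Set.univ) = {0} ∧
    ∃ x : G → A, ∀ n : ℕ, 1 ≤ n → (fun (x : G → A) (g : G) => f (x g))^[n] x ≠ 0 := by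
  set τ : (G → A) → (G → A) := fun x g => f (x g) with hτ
  -- iterates act pointwise
  have hiter : ∀ (n : ℕ) (x : G → A) (g : G), τ^[n] x g = f^[n] (x g) := by
    intro n
    induction n with
    | zero => intro x g; simp
    | succ n ih =>
        intro x g
        rw [Function.iterate_succ_apply', Function.iterate_succ_apply']
        simp only [hτ]
        rw [ih]
  set p : ℕ → Submodule K A := fun n => Submodule.span K (e '' Set.Ici n) with hp
  -- f maps p n into p (n+1)
  have hstep : ∀ n : ℕ, ∀ v ∈ p n, f v ∈ p (n + 1) := by
    intro n v hv
    induction hv using Submodule.span_induction with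
    | mem a ha =>
        obtain ⟨k, hk, rfl⟩ := ha
        rw [hfe]
        exact Submodule.subset_span ⟨k + 1, by simpa using hk, rfl⟩
    | zero => simp
    | add a b _ _ ha hb => rw [map_add]; exact (p (n+1)).add_mem ha hb
    | smul c a _ ha => rw [map_smul]; exact (p (n+1)).smul_mem c ha
  -- f of anything lands in p 1
  have hbase : ∀ a : A, f a ∈ p 1 := by
    intro a
    have h0 : a ∈ Submodule.span K (Set.range e) ⊔ C := by
      rw [hC.sup_eq_top]; trivial
    obtain ⟨s, hs, c, hc, rfl⟩ := Submodule.mem_sup.mp h0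
    rw [map_add, hfC c hc, add_zero]
    have hs0 : s ∈ p 0 := by
      rw [hp]
      simpa [Set.Ici, Set.image_univ] using hs
    simpa using hstep 0 s hs0
  have hrange : ∀ n : ℕ, ∀ a : A, f^[n + 1] a ∈ p (n + 1) := by
    intro n
    induction n with
    | zero => intro a; simpa using hbase a
    | succ n ih =>
        intro a
        rw [Function.iterate_succ_apply']
        exact hstep (n + 1) _ (ih a)
  -- a vector in all p n (n ≥ 1) is zero
  have hzero : ∀ v : A, (∀ n : ℕ, 1 ≤ n → v ∈ p n) → v = 0 := by
    intro v hv
    have h1 : v ∈ Submodule.span K (e '' Set.Ici 1) := hv 1 le_rfl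
    obtain ⟨l, hl, rfl⟩ := (Finsupp.mem_span_image_iff_linearCombination K).mp h1
    set N : ℕ := (l.support.sup id) + 1 with hN
    have hsupp : (l.support : Set ℕ) ⊆ Set.Iio N := by
      intro k hk
      have : k ≤ l.support.sup id := Finset.le_sup (f := id) hk
      exact Nat.lt_succ_of_le this
    have hlo : Finsupp.linearCombination K e l ∈ Submodule.span K (e '' Set.Iio N) :=
      (Finsupp.mem_span_image_iff_linearCombination K).mpr ⟨l, hsupp, rfl⟩
    have hhi : Finsupp.linearCombination K e l ∈ Submodule.span K (e '' Set.Ici N) :=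
      hv N (Nat.le_add_left 1 _)
    have hd := he.disjoint_span_image (s := Set.Iio N) (t := Set.Ici N)
      (Set.Iio_disjoint_Ici le_rfl)
    exact (Submodule.disjoint_def.mp hd) _ hlo hhi
  constructor
  · apply Set.eq_singleton_iff_unique_mem.mpr
    constructor
    · refine Set.mem_iInter.mpr fun n => Set.mem_iInter.mpr fun _ => ⟨0, Set.mem_univ _, ?_⟩
      funext g
      rw [hiter]
      simp
    · intro x hx
      funext g
      have : ∀ n : ℕ, 1 ≤ n → x g ∈ p n := by
        intro n hn
        have hx' := Set.mem_iInter.mp (Set.mem_iInter.mp hx n) hn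
        obtain ⟨y, -, rfl⟩ := hx'
        rw [hiter]
        obtain ⟨m, rfl⟩ := Nat.exists_eq_add_of_le' hn
        exact hrange m (y g)
      exact hzero _ this
  · refine ⟨fun _ => e 0, fun n hn hcontra => ?_⟩
    have hfe0 : ∀ m : ℕ, f^[m] (e 0) = e m := by
      intro m
      induction m with
      | zero => simp
      | succ m ih => rw [Function.iterate_succ_apply', ih, hfe]
    have := congrFun hcontra 1
    rw [hiter, hfe0] at this
    exact he.ne_zero n this
end
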